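/- arXiv:1507.06629 — 8 statements merged into one kernel-verified Lean document; each statement's English description precedes it below -/
import Mathlib

section
/- For every integer n ≥ 1, with the parameter choice s = 1/(2n² + n), the infimum of K_{r,s}(a,b) over all r ≥ 0 and all a, b ∈ [0,1] with a + b = 1 equals (4 − 4n²s)/(1 + s + 2ns), the supremum equals 4/s, and the ratio of infimum to supremum equals 1/(1+2n)². (This expresses that Hitchin's Hodge metric on the n-th Hirzebruch surface with s = 1/(2n²+n) has positive holomorphic sectional curvature that is 1/(1+2n)²-pinched.) -/
set_option maxHeartbeats 2000000


/-- The holomorphic sectional curvature `K_{r,s}(a,b) = α a² + β ab + γ b²` of Hitchin's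
metric `ω_s` on the `n`-th Hirzebruch surface along the fiber `z₁ = 0` with `|z₂|² = r`. -/
noncomputable def Khit (n : ℕ) (s r a b : ℝ) : ℝ :=
  (4 * ((1 + r) ^ 2 + (n : ℝ) * s * (1 + r - (n : ℝ) * r)) / (1 + r + (n : ℝ) * s) ^ 2) * a ^ 2
  + (8 * (n : ℝ) * (1 + (n : ℝ) * s - r ^ 2) / (1 + r + (n : ℝ) * s) ^ 2) * (a * b)
  + (4 / s) * b ^ 2

/-- numerator polynomial `(K - L) * E^2 * m` in coordinates `u = x-1`, with `b = 1-a`. -/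
noncomputable def FFhit (u r a : ℝ) : ℝ :=
  512 - 864*a + 432*a^2 + 768*r - 1728*r*a + 1080*r*a^2 + 288*r^2 - 864*r^2*a + 648*r^2*a^2
  + 1792*u - 3024*u*a + 1368*u*a^2 + 2816*u*r - 6048*u*r*a + 3420*u*r*a^2 + 1104*u*r^2
  - 3024*u*r^2*a + 2052*u*r^2*a^2 + 2432*u^2 - 4176*u^2*a + 1824*u^2*a^2 + 4032*u^2*r
  - 8352*u^2*r*a + 4416*u^2*r*a^2 + 1664*u^2*r^2 - 4176*u^2*r^2*a + 2592*u^2*r^2*a^2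
  + 1600*u^3 - 2848*u^3*a + 1264*u^3*a^2 + 2816*u^3*r - 5696*u^3*r*a + 2896*u^3*r*a^2
  + 1232*u^3*r^2 - 2848*u^3*r^2*a + 1632*u^3*r^2*a^2 + 512*u^4 - 960*u^4*a + 448*u^4*a^2
  + 960*u^4*r - 1920*u^4*r*a + 960*u^4*r*a^2 + 448*u^4*r^2 - 960*u^4*r^2*a + 512*u^4*r^2*a^2
  + 64*u^5 - 128*u^5*a + 64*u^5*a^2 + 128*u^5*r - 256*u^5*r*a + 128*u^5*r*a^2 + 64*u^5*r^2
  - 128*u^5*r^2*a + 64*u^5*r^2*a^2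

set_option maxHeartbeats 1000000 in
lemma FFhit_nonneg (u r a : ℝ) (hu : 0 ≤ u) (hr : 0 ≤ r) : 0 ≤ FFhit u r a := by
  obtain ⟨p, rfl⟩ : ∃ p : ℝ, u = p ^ 2 := ⟨Real.sqrt u, (Real.sq_sqrt hu).symm⟩
  obtain ⟨q, rfl⟩ : ∃ q : ℝ, r = q ^ 2 := ⟨Real.sqrt r, (Real.sq_sqrt hr).symm⟩
  set u := p ^ 2
  set r := q ^ 2
  have hA : (0:ℝ) < 432 + 1080*r + 648*r^2 + 1368*u + 3420*u*r + 2052*u*r^2 + 1824*u^2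
      + 4416*u^2*r + 2592*u^2*r^2 + 1264*u^3 + 2896*u^3*r + 1632*u^3*r^2 + 448*u^4
      + 960*u^4*r + 512*u^4*r^2 + 64*u^5 + 128*u^5*r + 64*u^5*r^2 := by positivity
  have hG : (0:ℝ) ≤ 46080 + 184320*r + 221184*r^2 + 82944*r^3 + 193536*u + 847872*u*r
      + 1069056*u*r^2 + 414720*u*r^3 + 332032*u^2 + 1635328*u^2*r + 2181120*u^2*r^2
      + 877824*u^2*r^3 + 297984*u^3 + 1714176*u^3*r + 2436096*u^3*r^2 + 1019904*u^3*r^3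
      + 147712*u^4 + 1054720*u^4*r + 1609728*u^4*r^2 + 702720*u^4*r^3 + 38400*u^5
      + 380928*u^5*r + 629760*u^5*r^2 + 287232*u^5*r^3 + 4096*u^6 + 74752*u^6*r
      + 135168*u^6*r^2 + 64512*u^6*r^3 + 6144*u^7*r + 12288*u^7*r^2 + 6144*u^7*r^3 := by
    positivity
  have hm : (0:ℝ) < 2*u + 3 := by positivity
  have hid : 4 * ((432 + 1080*r + 648*r^2 + 1368*u + 3420*u*r + 2052*u*r^2 + 1824*u^2
      + 4416*u^2*r + 2592*u^2*r^2 + 1264*u^3 + 2896*u^3*r + 1632*u^3*r^2 + 448*u^4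
      + 960*u^4*r + 512*u^4*r^2 + 64*u^5 + 128*u^5*r + 64*u^5*r^2)) * FFhit u r a
      = (2 * (432 + 1080*r + 648*r^2 + 1368*u + 3420*u*r + 2052*u*r^2 + 1824*u^2
          + 4416*u^2*r + 2592*u^2*r^2 + 1264*u^3 + 2896*u^3*r + 1632*u^3*r^2 + 448*u^4
          + 960*u^4*r + 512*u^4*r^2 + 64*u^5 + 128*u^5*r + 64*u^5*r^2) * a
        - (864 + 1728*r + 864*r^2 + 3024*u + 6048*u*r + 3024*u*r^2 + 4176*u^2 + 8352*u^2*r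
          + 4176*u^2*r^2 + 2848*u^3 + 5696*u^3*r + 2848*u^3*r^2 + 960*u^4 + 1920*u^4*r
          + 960*u^4*r^2 + 128*u^5 + 256*u^5*r + 128*u^5*r^2)) ^ 2
      + (2*u + 3) * (46080 + 184320*r + 221184*r^2 + 82944*r^3 + 193536*u + 847872*u*r
      + 1069056*u*r^2 + 414720*u*r^3 + 332032*u^2 + 1635328*u^2*r + 2181120*u^2*r^2
      + 877824*u^2*r^3 + 297984*u^3 + 1714176*u^3*r + 2436096*u^3*r^2 + 1019904*u^3*r^3
      + 147712*u^4 + 1054720*u^4*r + 1609728*u^4*r^2 + 702720*u^4*r^3 + 38400*u^5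
      + 380928*u^5*r + 629760*u^5*r^2 + 287232*u^5*r^3 + 4096*u^6 + 74752*u^6*r
      + 135168*u^6*r^2 + 64512*u^6*r^3 + 6144*u^7*r + 12288*u^7*r^2 + 6144*u^7*r^3) := by
    simp only [FFhit]; ring
  have h2 : 4 * ((432 + 1080*r + 648*r^2 + 1368*u + 3420*u*r + 2052*u*r^2 + 1824*u^2
      + 4416*u^2*r + 2592*u^2*r^2 + 1264*u^3 + 2896*u^3*r + 1632*u^3*r^2 + 448*u^4
      + 960*u^4*r + 512*u^4*r^2 + 64*u^5 + 128*u^5*r + 64*u^5*r^2)) * 0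
      ≤ 4 * ((432 + 1080*r + 648*r^2 + 1368*u + 3420*u*r + 2052*u*r^2 + 1824*u^2
      + 4416*u^2*r + 2592*u^2*r^2 + 1264*u^3 + 2896*u^3*r + 1632*u^3*r^2 + 448*u^4
      + 960*u^4*r + 512*u^4*r^2 + 64*u^5 + 128*u^5*r + 64*u^5*r^2)) * FFhit u r a := by
    rw [mul_zero, hid]
    have := sq_nonneg (2 * (432 + 1080*r + 648*r^2 + 1368*u + 3420*u*r
      + 2052*u*r^2 + 1824*u^2 + 4416*u^2*r + 2592*u^2*r^2 + 1264*u^3 + 2896*u^3*r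
      + 1632*u^3*r^2 + 448*u^4 + 960*u^4*r + 512*u^4*r^2 + 64*u^5 + 128*u^5*r + 64*u^5*r^2) * a
        - (864 + 1728*r + 864*r^2 + 3024*u + 6048*u*r + 3024*u*r^2 + 4176*u^2 + 8352*u^2*r
          + 4176*u^2*r^2 + 2848*u^3 + 5696*u^3*r + 2848*u^3*r^2 + 960*u^4 + 1920*u^4*r
          + 960*u^4*r^2 + 128*u^5 + 256*u^5*r + 128*u^5*r^2))
    have := mul_nonneg hm.le hG
    linarith
  exact le_of_mul_le_mul_left h2 (by linarith)


lemma Thit_nonneg (u r : ℝ) (hu : 0 ≤ u) (hr : 0 ≤ r) :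
    0 ≤ 48 + 72*r + 24*r^2 + 120*u + 196*u*r + 76*u*r^2 + 80*u^2 + 144*u^2*r + 64*u^2*r^2
      + 16*u^3 + 32*u^3*r + 16*u^3*r^2 ∧
    0 ≤ 96 + 192*r + 96*r^2 + 208*u + 416*u*r + 208*u*r^2 + 144*u^2 + 288*u^2*r
      + 144*u^2*r^2 + 32*u^3 + 64*u^3*r + 32*u^3*r^2 := by
  obtain ⟨p, rfl⟩ : ∃ p : ℝ, u = p ^ 2 := ⟨Real.sqrt u, (Real.sq_sqrt hu).symm⟩
  obtain ⟨q, rfl⟩ : ∃ q : ℝ, r = q ^ 2 := ⟨Real.sqrt r, (Real.sq_sqrt hr).symm⟩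
  constructor <;> positivity

/-- For every integer `n ≥ 1`, with `s = 1/(2n²+n)`, the infimum of `K_{r,s}(a,b)` over all
`r ≥ 0` and `a, b ∈ [0,1]` with `a + b = 1` equals `(4 − 4n²s)/(1 + s + 2ns)`, the supremum
equals `4/s`, and the ratio of infimum to supremum equals `1/(1+2n)²`. -/
theorem stmt_0 (n : ℕ) (hn : 1 ≤ n) (s : ℝ) (hs : s = 1 / (2 * (n : ℝ) ^ 2 + (n : ℝ))) :
    sInf {K : ℝ | ∃ r a b : ℝ, 0 ≤ r ∧ a ∈ Set.Icc (0 : ℝ) 1 ∧ b ∈ Set.Icc (0 : ℝ) 1 ∧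
        a + b = 1 ∧ K = Khit n s r a b}
      = (4 - 4 * (n : ℝ) ^ 2 * s) / (1 + s + 2 * (n : ℝ) * s) ∧
    sSup {K : ℝ | ∃ r a b : ℝ, 0 ≤ r ∧ a ∈ Set.Icc (0 : ℝ) 1 ∧ b ∈ Set.Icc (0 : ℝ) 1 ∧
        a + b = 1 ∧ K = Khit n s r a b}
      = 4 / s ∧
    ((4 - 4 * (n : ℝ) ^ 2 * s) / (1 + s + 2 * (n : ℝ) * s)) / (4 / s)
      = 1 / (1 + 2 * (n : ℝ)) ^ 2 := by
  have hx : (1:ℝ) ≤ (n:ℝ) := by exact_mod_cast hn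
  set x : ℝ := (n:ℝ) with hxdef
  have hx0 : (0:ℝ) < x := by linarith
  have hm : (0:ℝ) < 2*x+1 := by linarith
  have hsv : s = 1/(x*(2*x+1)) := by rw [hs, hxdef]; ring_nf
  have hs0 : (0:ℝ) < s := by rw [hsv]; positivity
  set S : Set ℝ := {K : ℝ | ∃ r a b : ℝ, 0 ≤ r ∧ a ∈ Set.Icc (0 : ℝ) 1 ∧ b ∈ Set.Icc (0 : ℝ) 1 ∧
      a + b = 1 ∧ K = Khit n s r a b} with hSdef
  have hLdef : (4 - 4 * x ^ 2 * s) / (1 + s + 2 * x * s) = 4*x/(2*x+1) := by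
    rw [hsv]
    rw [div_eq_div_iff (by rw [← hsv]; positivity) (by positivity)]
    field_simp
    ring
  -- generic identity for Khit
  have hkey : ∀ r a : ℝ, 0 ≤ r → Khit n s r a (1-a)
      = 4*x/(2*x+1) + FFhit (x-1) r a / (((2*x+1)*(1+r)+1)^2*(2*x+1)) := by
    intro r a hr
    have hE : (0:ℝ) < (2*x+1)*(1+r)+1 := by nlinarith
    have hD : (0:ℝ) < 1 + r + x * s := by rw [hsv]; positivity
    simp only [Khit, FFhit, ← hxdef, hsv]
    rw [hsv] at hD
    field_simp
    ring
  have hkeyU : ∀ r a : ℝ, 0 ≤ r → 4/s - Khit n s r a (1-a)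
      = ((48 + 72*r + 24*r^2 + 120*(x-1) + 196*(x-1)*r + 76*(x-1)*r^2 + 80*(x-1)^2
          + 144*(x-1)^2*r + 64*(x-1)^2*r^2 + 16*(x-1)^3 + 32*(x-1)^3*r + 16*(x-1)^3*r^2)*a^2
        + (96 + 192*r + 96*r^2 + 208*(x-1) + 416*(x-1)*r + 208*(x-1)*r^2 + 144*(x-1)^2
          + 288*(x-1)^2*r + 144*(x-1)^2*r^2 + 32*(x-1)^3 + 64*(x-1)^3*r
          + 32*(x-1)^3*r^2)*(a*(1-a))) * (2*x+1) / (((2*x+1)*(1+r)+1)^2) := by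
    intro r a hr
    have hE : (0:ℝ) < (2*x+1)*(1+r)+1 := by nlinarith
    have hD : (0:ℝ) < 1 + r + x * s := by rw [hsv]; positivity
    simp only [Khit, ← hxdef, hsv]
    rw [hsv] at hD
    field_simp
    ring
  -- lower bound
  have hlb : ∀ K ∈ S, 4*x/(2*x+1) ≤ K := by
    rintro K ⟨r, a, b, hr, ⟨ha0, ha1⟩, ⟨hb0, hb1⟩, hab, rfl⟩
    have hb' : b = 1 - a := by linarith
    subst hb'
    rw [hkey r a hr]
    have hE : (0:ℝ) < (2*x+1)*(1+r)+1 := by nlinarith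
    have h1 : 0 ≤ FFhit (x-1) r a / (((2*x+1)*(1+r)+1)^2*(2*x+1)) :=
      div_nonneg (FFhit_nonneg _ _ _ (by linarith) hr)
        (mul_nonneg (pow_nonneg hE.le 2) hm.le)
    linarith
  -- upper bound
  have hub : ∀ K ∈ S, K ≤ 4/s := by
    rintro K ⟨r, a, b, hr, ⟨ha0, ha1⟩, ⟨hb0, hb1⟩, hab, rfl⟩
    have hb' : b = 1 - a := by linarith
    subst hb'
    have hE : (0:ℝ) < (2*x+1)*(1+r)+1 := by nlinarith
    obtain ⟨hT1, hT2⟩ := Thit_nonneg (x-1) r (by linarith) hr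
    have h1 : 0 ≤ 4/s - Khit n s r a (1-a) := by
      rw [hkeyU r a hr]
      apply div_nonneg _ (pow_nonneg hE.le 2)
      apply mul_nonneg _ hm.le
      have haa : 0 ≤ a*(1-a) := mul_nonneg ha0 hb0
      have := mul_nonneg hT1 (sq_nonneg a)
      have := mul_nonneg hT2 haa
      nlinarith
    linarith
  -- membership of 4/s
  have hmem : 4/s ∈ S := by
    refine ⟨0, 0, 1, le_refl _, ⟨le_refl _, zero_le_one⟩, ⟨zero_le_one, le_refl _⟩, by ring, ?_⟩
    simp [Khit]
  have hne : S.Nonempty := ⟨4/s, hmem⟩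
  refine ⟨?_, ?_, ?_⟩
  · rw [hLdef]
    apply csInf_eq_of_forall_ge_of_forall_gt_exists_lt hne hlb
    intro w hw
    set ε : ℝ := w - 4*x/(2*x+1) with hεdef
    have hε : 0 < ε := by simp [hεdef]; linarith
    set r₀ : ℝ := 64*x^2*(x+1)/((2*x+1)^3*ε) with hr₀def
    have hr₀ : 0 < r₀ := by
      apply div_pos (by nlinarith) (by positivity)
    have hεr : ε*(r₀*(2*x+1)^3) = 64*x^2*(x+1) := by
      rw [hr₀def]; field_simp
    set a₀ : ℝ := 2*x/(2*x+1) with ha₀def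
    have hE : (0:ℝ) < (2*x+1)*(1+r₀)+1 := by nlinarith
    have hwit : Khit n s r₀ a₀ (1-a₀) = 4*x/(2*x+1)
        + 16*x^2*(x+1)*(4+3*r₀) / ((2*x+1)*((2*x+1)*(1+r₀)+1)^2) := by
      have hD : (0:ℝ) < 1 + r₀ + x * s := by rw [hsv]; positivity
      simp only [Khit, ← hxdef, hsv, ha₀def]
      rw [hsv] at hD
      field_simp
      ring
    refine ⟨Khit n s r₀ a₀ (1-a₀), ⟨r₀, a₀, 1-a₀, hr₀.le,
      ⟨by positivity, by rw [div_le_one hm]; linarith⟩,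
      ⟨by simp [ha₀def]; rw [div_le_one hm]; linarith, by
        simp only [ha₀def]
        have : (0:ℝ) ≤ 2*x/(2*x+1) := by positivity
        linarith⟩, by ring, rfl⟩, ?_⟩
    rw [hwit]
    have h3 : (ε*(r₀*(2*x+1)^3))*r₀ = (64*x^2*(x+1))*r₀ := by rw [hεr]
    have hbound : 16*x^2*(x+1)*(4+3*r₀) < ε * ((2*x+1)*((2*x+1)*(1+r₀)+1)^2) := by
      nlinarith [mul_pos hε (pow_pos hm 3), mul_pos (mul_pos hε hm) hr₀,
        mul_pos hε hm, mul_nonneg (mul_nonneg (sq_nonneg x) (by linarith : (0:ℝ) ≤ x+1)) hr₀.le,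
        mul_pos (mul_pos hε hm) hE, mul_pos (mul_pos (mul_pos hε hm) hm) hr₀]
    have hpos : (0:ℝ) < (2*x+1)*((2*x+1)*(1+r₀)+1)^2 := mul_pos hm (pow_pos hE 2)
    have := (div_lt_iff₀ hpos).mpr hbound
    linarith
  · exact le_antisymm (csSup_le hne hub) (le_csSup ⟨4/s, hub⟩ hmem)
  · rw [hLdef, hsv]
    rw [div_eq_div_iff (by positivity) (by positivity)]
    field_simp
    ring
end

section
/- For every integer n ≥ 1 and every real s with 0 < s < 1/n², the following hold: K_{r,s}(a,b) > 0 for all r ≥ 0 and a, b ∈ [0,1] with a + b = 1; the infimum of K_{r,s}(a,b) over this domain equals (4 − 4n²s)/(1 + s + 2ns); and the supremum equals 4/s, attained at (a,b) = (0,1) for every r ≥ 0. -/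
set_option maxHeartbeats 1600000
set_option maxRecDepth 16000

lemma aux_delta (N s r : ℝ) (hN : 0 ≤ N) (hr : 0 ≤ r) (hs : 0 ≤ s) (h1 : 0 ≤ 1 - s*N^2) :
    0 ≤ 192*s^2*N + 192*s^3*N + 960*s^3*N^2 + -128*s^3*N^3 + 576*s^4*N^2 + 1664*s^4*N^3 + -576*s^4*N^4 + 640*s^5*N^3 + 1280*s^5*N^4 + -896*s^5*N^5 + 320*s^6*N^4 + 448*s^6*N^5 + -576*s^6*N^6 + 64*s^7*N^5 + 64*s^7*N^6 + -128*s^7*N^7 + 576*r*s^2*N + 192*r*s^2*N^2 + 576*r*s^3*N + 2880*r*s^3*N^2 + 640*r*s^3*N^3 + 1536*r*s^4*N^2 + 4736*r*s^4*N^3 + 384*r*s^4*N^4 + 1408*r*s^5*N^3 + 3200*r*s^5*N^4 + -512*r*s^5*N^5 + 512*r*s^6*N^4 + 832*r*s^6*N^5 + -576*r*s^6*N^6 + 64*r*s^7*N^5 + 64*r*s^7*N^6 + -128*r*s^7*N^7 + 576*r^2*s^2*N + 384*r^2*s^2*N^2 + 576*r^2*s^3*N + 2880*r^2*s^3*N^2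 + 1536*r^2*s^3*N^3 + 1344*r^2*s^4*N^2 + 4416*r^2*s^4*N^3 + 1920*r^2*s^4*N^4 + 960*r^2*s^5*N^3 + 2496*r^2*s^5*N^4 + 768*r^2*s^5*N^5 + 192*r^2*s^6*N^4 + 384*r^2*s^6*N^5 + 192*r^3*s^2*N + 192*r^3*s^2*N^2 + 192*r^3*s^3*N + 960*r^3*s^3*N^2 + 768*r^3*s^3*N^3 + 384*r^3*s^4*N^2 + 1344*r^3*s^4*N^3 + 960*r^3*s^4*N^4 + 192*r^3*s^5*N^3 + 576*r^3*s^5*N^4 + 384*r^3*s^5*N^5 := by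
  have key : (192*s^2*N + 192*s^3*N + 960*s^3*N^2 + -128*s^3*N^3 + 576*s^4*N^2 + 1664*s^4*N^3 + -576*s^4*N^4 + 640*s^5*N^3 + 1280*s^5*N^4 + -896*s^5*N^5 + 320*s^6*N^4 + 448*s^6*N^5 + -576*s^6*N^6 + 64*s^7*N^5 + 64*s^7*N^6 + -128*s^7*N^7 + 576*r*s^2*N + 192*r*s^2*N^2 + 576*r*s^3*N + 2880*r*s^3*N^2 + 640*r*s^3*N^3 + 1536*r*s^4*N^2 + 4736*r*s^4*N^3 + 384*r*s^4*N^4 + 1408*r*s^5*N^3 + 3200*r*s^5*N^4 + -512*r*s^5*N^5 + 512*r*s^6*N^4 + 832*r*s^6*N^5 + -576*r*s^6*N^6 + 64*r*s^7*N^5 + 64*r*s^7*N^6 + -128*r*s^7*N^7 + 576*r^2*s^2*N + 384*r^2*s^2*N^2 + 576*r^2*s^3*N + 2880*r^2*s^3*N^2 + 1536*r^2*s^3*N^3 + 1344*r^2*s^4*N^2 + 4416*r^2*s^4*N^3 + 1920*r^2*s^4*N^4 + 960*r^2*s^5*N^3 + 2496*r^2*s^5*N^4 + 768*r^2*s^5*N^5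 + 192*r^2*s^6*N^4 + 384*r^2*s^6*N^5 + 192*r^3*s^2*N + 192*r^3*s^2*N^2 + 192*r^3*s^3*N + 960*r^3*s^3*N^2 + 768*r^3*s^3*N^3 + 384*r^3*s^4*N^2 + 1344*r^3*s^4*N^3 + 960*r^3*s^4*N^4 + 192*r^3*s^5*N^3 + 576*r^3*s^5*N^4 + 384*r^3*s^5*N^5)
      = (1 - s*N^2) * (128*s^2*N + 576*s^3*N^2 + 896*s^4*N^3 + 576*s^5*N^4 + 128*s^6*N^5 + 512*r*s^4*N^3 + 576*r*s^5*N^4 + 128*r*s^6*N^5) + (64*s^2*N + 192*s^3*N + 384*s^3*N^2 + 576*s^4*N^2 + 768*s^4*N^3 + 640*s^5*N^3 + 704*s^5*N^4 + 320*s^6*N^4 + 320*s^6*N^5 + 64*s^7*N^5 + 64*s^7*N^6 + 576*r*s^2*N + 192*r*s^2*N^2 + 576*r*s^3*N + 2880*r*s^3*N^2 + 640*r*s^3*N^3 + 1536*r*s^4*N^2 + 4224*r*s^4*N^3 + 384*r*s^4*N^4 + 1408*r*s^5*N^3 + 2624*r*s^5*N^4 + 512*r*s^6*N^4 + 704*r*s^6*N^5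 + 64*r*s^7*N^5 + 64*r*s^7*N^6 + 576*r^2*s^2*N + 384*r^2*s^2*N^2 + 576*r^2*s^3*N + 2880*r^2*s^3*N^2 + 1536*r^2*s^3*N^3 + 1344*r^2*s^4*N^2 + 4416*r^2*s^4*N^3 + 1920*r^2*s^4*N^4 + 960*r^2*s^5*N^3 + 2496*r^2*s^5*N^4 + 768*r^2*s^5*N^5 + 192*r^2*s^6*N^4 + 384*r^2*s^6*N^5 + 192*r^3*s^2*N + 192*r^3*s^2*N^2 + 192*r^3*s^3*N + 960*r^3*s^3*N^2 + 768*r^3*s^3*N^3 + 384*r^3*s^4*N^2 + 1344*r^3*s^4*N^3 + 960*r^3*s^4*N^4 + 192*r^3*s^5*N^3 + 576*r^3*s^5*N^4 + 384*r^3*s^5*N^5) := by ring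
  rw [key]
  obtain ⟨x, rfl⟩ : ∃ x : ℝ, x^2 = r := ⟨Real.sqrt r, Real.sq_sqrt hr⟩
  obtain ⟨y, rfl⟩ : ∃ y : ℝ, y^2 = s := ⟨Real.sqrt s, Real.sq_sqrt hs⟩
  obtain ⟨w, rfl⟩ : ∃ w : ℝ, w^2 = N := ⟨Real.sqrt N, Real.sq_sqrt hN⟩
  obtain ⟨u, hu⟩ : ∃ u : ℝ, u^2 = 1 - y^2*(w^2)^2 := ⟨Real.sqrt _, Real.sq_sqrt h1⟩
  rw [← hu]
  positivity

set_option maxHeartbeats 6000000 in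
lemma aux_lower (N s r a : ℝ) (hN : 1 ≤ N) (hs0 : 0 < s) (hs1 : N^2*s < 1)
    (hr : 0 ≤ r) (ha0 : 0 ≤ a) (ha1 : a ≤ 1) :
    (4 - 4 * N ^ 2 * s) / (1 + s + 2 * N * s) ≤ (4 * ((1 + r) ^ 2 + N * s * (1 + r - N * r)) / (1 + r + N * s) ^ 2) * a ^ 2 + (8 * N * (1 + N * s - r ^ 2) / (1 + r + N * s) ^ 2) * (a * (1-a)) + (4 / s) * (1-a) ^ 2 := by
  have hN0 : (0:ℝ) < N := by linarith
  have hP : (0:ℝ) < 1 + r + N*s := by nlinarith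
  have hD : (0:ℝ) < 1 + s + 2*N*s := by nlinarith
  have hΔ : 0 ≤ 192*s^2*N + 192*s^3*N + 960*s^3*N^2 + -128*s^3*N^3 + 576*s^4*N^2 + 1664*s^4*N^3 + -576*s^4*N^4 + 640*s^5*N^3 + 1280*s^5*N^4 + -896*s^5*N^5 + 320*s^6*N^4 + 448*s^6*N^5 + -576*s^6*N^6 + 64*s^7*N^5 + 64*s^7*N^6 + -128*s^7*N^7 + 576*r*s^2*N + 192*r*s^2*N^2 + 576*r*s^3*N + 2880*r*s^3*N^2 + 640*r*s^3*N^3 + 1536*r*s^4*N^2 + 4736*r*s^4*N^3 + 384*r*s^4*N^4 + 1408*r*s^5*N^3 + 3200*r*s^5*N^4 + -512*r*s^5*N^5 + 512*r*s^6*N^4 + 832*r*s^6*N^5 + -576*r*s^6*N^6 + 64*r*s^7*N^5 + 64*r*s^7*N^6 + -128*r*s^7*N^7 + 576*r^2*s^2*N + 384*r^2*s^2*N^2 + 576*r^2*s^3*N + 2880*r^2*s^3*N^2 + 1536*r^2*s^3*N^3 + 1344*r^2*s^4*N^2 + 4416*r^2*s^4*N^3 + 1920*r^2*s^4*N^4 +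 960*r^2*s^5*N^3 + 2496*r^2*s^5*N^4 + 768*r^2*s^5*N^5 + 192*r^2*s^6*N^4 + 384*r^2*s^6*N^5 + 192*r^3*s^2*N + 192*r^3*s^2*N^2 + 192*r^3*s^3*N + 960*r^3*s^3*N^2 + 768*r^3*s^3*N^3 + 384*r^3*s^4*N^2 + 1344*r^3*s^4*N^3 + 960*r^3*s^4*N^4 + 192*r^3*s^5*N^3 + 576*r^3*s^5*N^4 + 384*r^3*s^5*N^5 :=
    aux_delta N s r hN0.le hr hs0.le (by nlinarith)
  have hC : (0:ℝ) < 4*(1+N*s)^2*(1+r+N*s)^2 := by positivity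
  have key : 4*(4*(1+N*s)^2*(1+r+N*s)^2)*(4*(1-a)^2 + 16*s*(1-a)^2*N + -8*s*a*(1-a) + 8*s*a*(1-a)*N + 24*s^2*(1-a)^2*N^2 + -8*s^2*a*(1-a)*N + 32*s^2*a*(1-a)*N^2 + 4*s^2*a^2 + 4*s^2*a^2*N + 4*s^2*a^2*N^2 + 16*s^3*(1-a)^2*N^3 + 32*s^3*a*(1-a)*N^3 + 4*s^3*a^2*N + 4*s^3*a^2*N^2 + 8*s^3*a^2*N^3 + 4*s^4*(1-a)^2*N^4 + 8*s^4*a*(1-a)*N^4 + 4*s^4*a^2*N^4 + 8*r*(1-a)^2 + 24*r*s*(1-a)^2*N + -16*r*s*a*(1-a) + 24*r*s^2*(1-a)^2*N^2 + -16*r*s^2*a*(1-a)*N + 16*r*s^2*a*(1-a)*N^2 + 8*r*s^2*a^2 + 12*r*s^2*a^2*N + 4*r*s^2*a^2*N^2 + 8*r*s^3*(1-a)^2*N^3 + 16*r*s^3*a*(1-a)*N^3 + 4*r*s^3*a^2*N + 4*r*s^3*a^2*N^2 + 4*r^2*(1-a)^2 + 8*r^2*s*(1-a)^2*N + -8*r^2*s*a*(1-a)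 + -8*r^2*s*a*(1-a)*N + 4*r^2*s^2*(1-a)^2*N^2 + -8*r^2*s^2*a*(1-a)*N + -8*r^2*s^2*a*(1-a)*N^2 + 4*r^2*s^2*a^2 + 8*r^2*s^2*a^2*N + 4*r^2*s^2*a^2*N^2) =
      ((-8*s + 8*s*N + -8*s^2*N + 32*s^2*N^2 + 32*s^3*N^3 + 8*s^4*N^4 + -16*r*s + -16*r*s^2*N + 16*r*s^2*N^2 + 16*r*s^3*N^3 + -8*r^2*s + -8*r^2*s*N + -8*r^2*s^2*N + -8*r^2*s^2*N^2)*a + 2*(4*(1+N*s)^2*(1+r+N*s)^2)*(1-a))^2 + (192*s^2*N + 192*s^3*N + 960*s^3*N^2 + -128*s^3*N^3 + 576*s^4*N^2 + 1664*s^4*N^3 + -576*s^4*N^4 + 640*s^5*N^3 + 1280*s^5*N^4 + -896*s^5*N^5 + 320*s^6*N^4 + 448*s^6*N^5 + -576*s^6*N^6 + 64*s^7*N^5 + 64*s^7*N^6 + -128*s^7*N^7 + 576*r*s^2*N + 192*r*s^2*N^2 + 576*r*s^3*N + 2880*r*s^3*N^2 + 640*r*s^3*N^3 + 1536*r*s^4*N^2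 + 4736*r*s^4*N^3 + 384*r*s^4*N^4 + 1408*r*s^5*N^3 + 3200*r*s^5*N^4 + -512*r*s^5*N^5 + 512*r*s^6*N^4 + 832*r*s^6*N^5 + -576*r*s^6*N^6 + 64*r*s^7*N^5 + 64*r*s^7*N^6 + -128*r*s^7*N^7 + 576*r^2*s^2*N + 384*r^2*s^2*N^2 + 576*r^2*s^3*N + 2880*r^2*s^3*N^2 + 1536*r^2*s^3*N^3 + 1344*r^2*s^4*N^2 + 4416*r^2*s^4*N^3 + 1920*r^2*s^4*N^4 + 960*r^2*s^5*N^3 + 2496*r^2*s^5*N^4 + 768*r^2*s^5*N^5 + 192*r^2*s^6*N^4 + 384*r^2*s^6*N^5 + 192*r^3*s^2*N + 192*r^3*s^2*N^2 + 192*r^3*s^3*N + 960*r^3*s^3*N^2 + 768*r^3*s^3*N^3 + 384*r^3*s^4*N^2 + 1344*r^3*s^4*N^3 + 960*r^3*s^4*N^4 + 192*r^3*s^5*N^3 + 576*r^3*s^5*N^4 + 384*r^3*s^5*N^5)*a^2 := by ring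
  have h4C : (0:ℝ) < 4*(4*(1+N*s)^2*(1+r+N*s)^2) := by positivity
  have h4CE : 0 ≤ 4*(4*(1+N*s)^2*(1+r+N*s)^2)*(4*(1-a)^2 + 16*s*(1-a)^2*N + -8*s*a*(1-a) + 8*s*a*(1-a)*N + 24*s^2*(1-a)^2*N^2 + -8*s^2*a*(1-a)*N + 32*s^2*a*(1-a)*N^2 + 4*s^2*a^2 + 4*s^2*a^2*N + 4*s^2*a^2*N^2 + 16*s^3*(1-a)^2*N^3 + 32*s^3*a*(1-a)*N^3 + 4*s^3*a^2*N + 4*s^3*a^2*N^2 + 8*s^3*a^2*N^3 + 4*s^4*(1-a)^2*N^4 + 8*s^4*a*(1-a)*N^4 + 4*s^4*a^2*N^4 + 8*r*(1-a)^2 + 24*r*s*(1-a)^2*N + -16*r*s*a*(1-a) + 24*r*s^2*(1-a)^2*N^2 + -16*r*s^2*a*(1-a)*N + 16*r*s^2*a*(1-a)*N^2 + 8*r*s^2*a^2 + 12*r*s^2*a^2*N + 4*r*s^2*a^2*N^2 + 8*r*s^3*(1-a)^2*N^3 + 16*r*s^3*a*(1-a)*N^3 + 4*r*s^3*a^2*N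 + 4*r*s^3*a^2*N^2 + 4*r^2*(1-a)^2 + 8*r^2*s*(1-a)^2*N + -8*r^2*s*a*(1-a) + -8*r^2*s*a*(1-a)*N + 4*r^2*s^2*(1-a)^2*N^2 + -8*r^2*s^2*a*(1-a)*N + -8*r^2*s^2*a*(1-a)*N^2 + 4*r^2*s^2*a^2 + 8*r^2*s^2*a^2*N + 4*r^2*s^2*a^2*N^2) := by
    rw [key]
    exact add_nonneg (sq_nonneg _) (mul_nonneg hΔ (sq_nonneg a))
  have hE : 0 ≤ 4*(1-a)^2 + 16*s*(1-a)^2*N + -8*s*a*(1-a) + 8*s*a*(1-a)*N + 24*s^2*(1-a)^2*N^2 + -8*s^2*a*(1-a)*N + 32*s^2*a*(1-a)*N^2 + 4*s^2*a^2 + 4*s^2*a^2*N + 4*s^2*a^2*N^2 + 16*s^3*(1-a)^2*N^3 + 32*s^3*a*(1-a)*N^3 + 4*s^3*a^2*N + 4*s^3*a^2*N^2 + 8*s^3*a^2*N^3 + 4*s^4*(1-a)^2*N^4 + 8*s^4*a*(1-a)*N^4 + 4*s^4*a^2*N^4 + 8*r*(1-a)^2 + 24*r*s*(1-a)^2*N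 + -16*r*s*a*(1-a) + 24*r*s^2*(1-a)^2*N^2 + -16*r*s^2*a*(1-a)*N + 16*r*s^2*a*(1-a)*N^2 + 8*r*s^2*a^2 + 12*r*s^2*a^2*N + 4*r*s^2*a^2*N^2 + 8*r*s^3*(1-a)^2*N^3 + 16*r*s^3*a*(1-a)*N^3 + 4*r*s^3*a^2*N + 4*r*s^3*a^2*N^2 + 4*r^2*(1-a)^2 + 8*r^2*s*(1-a)^2*N + -8*r^2*s*a*(1-a) + -8*r^2*s*a*(1-a)*N + 4*r^2*s^2*(1-a)^2*N^2 + -8*r^2*s^2*a*(1-a)*N + -8*r^2*s^2*a*(1-a)*N^2 + 4*r^2*s^2*a^2 + 8*r^2*s^2*a^2*N + 4*r^2*s^2*a^2*N^2 := (mul_nonneg_iff_of_pos_left h4C).mp h4CE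
  have hKm : ((4 * ((1 + r) ^ 2 + N * s * (1 + r - N * r)) / (1 + r + N * s) ^ 2) * a ^ 2 + (8 * N * (1 + N * s - r ^ 2) / (1 + r + N * s) ^ 2) * (a * (1-a)) + (4 / s) * (1-a) ^ 2) - (4 - 4 * N ^ 2 * s) / (1 + s + 2 * N * s)
      = (4*(1-a)^2 + 16*s*(1-a)^2*N + -8*s*a*(1-a) + 8*s*a*(1-a)*N + 24*s^2*(1-a)^2*N^2 + -8*s^2*a*(1-a)*N + 32*s^2*a*(1-a)*N^2 + 4*s^2*a^2 + 4*s^2*a^2*N + 4*s^2*a^2*N^2 + 16*s^3*(1-a)^2*N^3 + 32*s^3*a*(1-a)*N^3 + 4*s^3*a^2*N + 4*s^3*a^2*N^2 + 8*s^3*a^2*N^3 + 4*s^4*(1-a)^2*N^4 + 8*s^4*a*(1-a)*N^4 + 4*s^4*a^2*N^4 + 8*r*(1-a)^2 + 24*r*s*(1-a)^2*N + -16*r*s*a*(1-a) + 24*r*s^2*(1-a)^2*N^2 + -16*r*s^2*a*(1-a)*N + 16*r*s^2*a*(1-a)*N^2 + 8*r*s^2*a^2 + 12*r*s^2*a^2*N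 + 4*r*s^2*a^2*N^2 + 8*r*s^3*(1-a)^2*N^3 + 16*r*s^3*a*(1-a)*N^3 + 4*r*s^3*a^2*N + 4*r*s^3*a^2*N^2 + 4*r^2*(1-a)^2 + 8*r^2*s*(1-a)^2*N + -8*r^2*s*a*(1-a) + -8*r^2*s*a*(1-a)*N + 4*r^2*s^2*(1-a)^2*N^2 + -8*r^2*s^2*a*(1-a)*N + -8*r^2*s^2*a*(1-a)*N^2 + 4*r^2*s^2*a^2 + 8*r^2*s^2*a^2*N + 4*r^2*s^2*a^2*N^2) / (s*(1 + s + 2*N*s)*(1 + r + N*s)^2) := by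
    field_simp
    ring
  have hq : 0 ≤ (4*(1-a)^2 + 16*s*(1-a)^2*N + -8*s*a*(1-a) + 8*s*a*(1-a)*N + 24*s^2*(1-a)^2*N^2 + -8*s^2*a*(1-a)*N + 32*s^2*a*(1-a)*N^2 + 4*s^2*a^2 + 4*s^2*a^2*N + 4*s^2*a^2*N^2 + 16*s^3*(1-a)^2*N^3 + 32*s^3*a*(1-a)*N^3 + 4*s^3*a^2*N + 4*s^3*a^2*N^2 + 8*s^3*a^2*N^3 + 4*s^4*(1-a)^2*N^4 + 8*s^4*a*(1-a)*N^4 + 4*s^4*a^2*N^4 + 8*r*(1-a)^2 + 24*r*s*(1-a)^2*N + -16*r*s*a*(1-a) + 24*r*s^2*(1-a)^2*N^2 + -16*r*s^2*a*(1-a)*N + 16*r*s^2*a*(1-a)*N^2 + 8*r*s^2*a^2 + 12*r*s^2*a^2*N + 4*r*s^2*a^2*N^2 + 8*r*s^3*(1-a)^2*N^3 + 16*r*s^3*a*(1-a)*N^3 + 4*r*s^3*a^2*N + 4*r*s^3*a^2*N^2 + 4*r^2*(1-a)^2 + 8*r^2*s*(1-a)^2*N + -8*r^2*s*a*(1-a)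 + -8*r^2*s*a*(1-a)*N + 4*r^2*s^2*(1-a)^2*N^2 + -8*r^2*s^2*a*(1-a)*N + -8*r^2*s^2*a*(1-a)*N^2 + 4*r^2*s^2*a^2 + 8*r^2*s^2*a^2*N + 4*r^2*s^2*a^2*N^2) / (s*(1 + s + 2*N*s)*(1 + r + N*s)^2) :=
    div_nonneg hE (by positivity)
  linarith

lemma aux_upper (N s r a : ℝ) (hN : 1 ≤ N) (hs0 : 0 < s) (hs1 : N^2*s < 1)
    (hr : 0 ≤ r) (ha0 : 0 ≤ a) (ha1 : a ≤ 1) :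
    (4 * ((1 + r) ^ 2 + N * s * (1 + r - N * r)) / (1 + r + N * s) ^ 2) * a ^ 2 + (8 * N * (1 + N * s - r ^ 2) / (1 + r + N * s) ^ 2) * (a * (1-a)) + (4 / s) * (1-a) ^ 2 ≤ 4 / s := by
  have hN0 : (0:ℝ) < N := by linarith
  have hP : (0:ℝ) < 1 + r + N*s := by nlinarith
  have hs2 : s ≤ 1 := by nlinarith
  have hb : (0:ℝ) ≤ 1 - a := by linarith
  have t1 : (0:ℝ) ≤ 4*(1-s)*(1+r)^2*a^2 :=
    mul_nonneg (mul_nonneg (by linarith) (sq_nonneg _)) (sq_nonneg a)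
  have t2 : (0:ℝ) ≤ 8*s*N*(1+r)*a^2 :=
    mul_nonneg (mul_nonneg (mul_nonneg (by nlinarith) (by linarith)) (by linarith)) (sq_nonneg a)
  have t3 : (0:ℝ) ≤ 4*s^2*N*(N-1)*(1+r)*a^2 :=
    mul_nonneg (mul_nonneg (mul_nonneg (mul_nonneg (by positivity) (by linarith)) (by linarith)) (by linarith)) (sq_nonneg a)
  have t4 : (0:ℝ) ≤ 8*(1+s*N)*(1+r)^2*(a*(1-a)) :=
    mul_nonneg (mul_nonneg (by nlinarith) (sq_nonneg _)) (mul_nonneg ha0 hb)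
  have hF : (0:ℝ) ≤ 4*(1-s)*(1+r)^2*a^2 + 8*s*N*(1+r)*a^2 + 4*s^2*N*(N-1)*(1+r)*a^2
      + 8*(1+s*N)*(1+r)^2*(a*(1-a)) := by linarith
  have hKm : 4 / s - ((4 * ((1 + r) ^ 2 + N * s * (1 + r - N * r)) / (1 + r + N * s) ^ 2) * a ^ 2 + (8 * N * (1 + N * s - r ^ 2) / (1 + r + N * s) ^ 2) * (a * (1-a)) + (4 / s) * (1-a) ^ 2)
      = (4*(1-s)*(1+r)^2*a^2 + 8*s*N*(1+r)*a^2 + 4*s^2*N*(N-1)*(1+r)*a^2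
        + 8*(1+s*N)*(1+r)^2*(a*(1-a))) / (s*(1 + r + N*s)^2) := by
    field_simp
    ring
  have hq : 0 ≤ (4*(1-s)*(1+r)^2*a^2 + 8*s*N*(1+r)*a^2 + 4*s^2*N*(N-1)*(1+r)*a^2
        + 8*(1+s*N)*(1+r)^2*(a*(1-a))) / (s*(1 + r + N*s)^2) :=
    div_nonneg hF (by positivity)
  linarith

lemma aux_approx (N s ε : ℝ) (hN : 1 ≤ N) (hs0 : 0 < s) (hs1 : N^2*s < 1) (hε : 0 < ε) :
    ∃ r : ℝ, 0 ≤ r ∧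
      (4 * ((1 + r) ^ 2 + N * s * (1 + r - N * r)) / (1 + r + N * s) ^ 2) * ((1+N*s)/(1+s+2*N*s)) ^ 2 + (8 * N * (1 + N * s - r ^ 2) / (1 + r + N * s) ^ 2) * (((1+N*s)/(1+s+2*N*s)) * ((s*(N+1))/(1+s+2*N*s))) + (4 / s) * ((s*(N+1))/(1+s+2*N*s)) ^ 2
        ≤ (4 - 4 * N ^ 2 * s) / (1 + s + 2 * N * s) + ε := by
  have hN0 : (0:ℝ) < N := by linarith
  set c : ℝ := 4*s*N*(1+s*N)^2*((3+4*N+s*N*(1+2*N)) + 3*(1+N)) with hc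
  have hc0 : 0 < c := by
    have h1 : (0:ℝ) < 1+s*N := by nlinarith
    have h2 : (0:ℝ) < (3+4*N+s*N*(1+2*N)) + 3*(1+N) := by nlinarith
    positivity
  refine ⟨max 1 (c/ε), le_trans zero_le_one (le_max_left _ _), ?_⟩
  set r : ℝ := max 1 (c/ε) with hrdef
  have hr1 : (1:ℝ) ≤ r := le_max_left _ _
  have hr0 : (0:ℝ) < r := by linarith
  have hrc : c/ε ≤ r := le_max_right _ _
  have hrc' : c ≤ ε * r := by
    rw [div_le_iff₀ hε] at hrc
    linarith [hrc]
  have hP : (0:ℝ) < 1 + r + N*s := by nlinarith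
  have hD : (0:ℝ) < 1 + s + 2*N*s := by nlinarith
  have hD1 : (1:ℝ) ≤ 1 + s + 2*N*s := by nlinarith
  have hPr : r ≤ 1 + r + N*s := by nlinarith
  have hid : ((4 * ((1 + r) ^ 2 + N * s * (1 + r - N * r)) / (1 + r + N * s) ^ 2) * ((1+N*s)/(1+s+2*N*s)) ^ 2 + (8 * N * (1 + N * s - r ^ 2) / (1 + r + N * s) ^ 2) * (((1+N*s)/(1+s+2*N*s)) * ((s*(N+1))/(1+s+2*N*s))) + (4 / s) * ((s*(N+1))/(1+s+2*N*s)) ^ 2) - (4 - 4 * N ^ 2 * s) / (1 + s + 2 * N * s)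
      = (4*s*N*(1+s*N)^2*((3+4*N+s*N*(1+2*N)) + 3*(1+N)*r))
        / ((1 + s + 2*N*s)^2*(1 + r + N*s)^2) := by
    field_simp
    ring
  have hnum : 4*s*N*(1+s*N)^2*((3+4*N+s*N*(1+2*N)) + 3*(1+N)*r) ≤ c * r := by
    rw [hc]
    have he : (0:ℝ) ≤ 4*s*N*(1+s*N)^2 := by positivity
    nlinarith [mul_nonneg he (mul_nonneg (by nlinarith : (0:ℝ) ≤ 3+4*N+s*N*(1+2*N)) (by linarith : (0:ℝ) ≤ r-1))]
  have hden : r^2 ≤ (1 + s + 2*N*s)^2*(1 + r + N*s)^2 := by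
    have hD2 : (1:ℝ) ≤ (1 + s + 2*N*s)^2 := by nlinarith
    have h1 : r^2 ≤ (1 + r + N*s)^2 := by nlinarith
    calc r^2 ≤ (1 + r + N*s)^2 := h1
      _ = 1*(1 + r + N*s)^2 := by ring
      _ ≤ (1 + s + 2*N*s)^2*(1 + r + N*s)^2 :=
          mul_le_mul_of_nonneg_right hD2 (sq_nonneg _)
  have hdiv : (4*s*N*(1+s*N)^2*((3+4*N+s*N*(1+2*N)) + 3*(1+N)*r))
        / ((1 + s + 2*N*s)^2*(1 + r + N*s)^2) ≤ ε := by
    rw [div_le_iff₀ (by positivity)]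
    have h1 : c * r ≤ ε * r * r := by nlinarith
    have h2 : ε * r * r = ε * r^2 := by ring
    have h3 : ε * r^2 ≤ ε * ((1 + s + 2*N*s)^2*(1 + r + N*s)^2) := by
      have := mul_le_mul_of_nonneg_left hden hε.le
      linarith
    linarith
  linarith

/-- For every integer `n ≥ 1` and `0 < s < 1/n²`: `K_{r,s}(a,b) > 0` on the domain, the
infimum equals `(4 − 4n²s)/(1 + s + 2ns)`, and the supremum equals `4/s`, attained at
`(a,b) = (0,1)` for every `r ≥ 0`. -/
theorem stmt_1 (n : ℕ) (hn : 1 ≤ n) (s : ℝ) (hs0 : 0 < s) (hs1 : s < 1 / (n : ℝ) ^ 2) :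
    (∀ r a b : ℝ, 0 ≤ r → a ∈ Set.Icc (0 : ℝ) 1 → b ∈ Set.Icc (0 : ℝ) 1 → a + b = 1 →
      0 < Khit n s r a b) ∧
    sInf {K : ℝ | ∃ r a b : ℝ, 0 ≤ r ∧ a ∈ Set.Icc (0 : ℝ) 1 ∧ b ∈ Set.Icc (0 : ℝ) 1 ∧
        a + b = 1 ∧ K = Khit n s r a b}
      = (4 - 4 * (n : ℝ) ^ 2 * s) / (1 + s + 2 * (n : ℝ) * s) ∧
    sSup {K : ℝ | ∃ r a b : ℝ, 0 ≤ r ∧ a ∈ Set.Icc (0 : ℝ) 1 ∧ b ∈ Set.Icc (0 : ℝ) 1 ∧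
        a + b = 1 ∧ K = Khit n s r a b}
      = 4 / s ∧
    (∀ r : ℝ, 0 ≤ r → Khit n s r 0 1 = 4 / s) := by
  have hN : (1:ℝ) ≤ (n:ℝ) := by exact_mod_cast hn
  have hN0 : (0:ℝ) < (n:ℝ) := by linarith
  have hs1' : (n:ℝ)^2*s < 1 := by
    rw [lt_div_iff₀ (by positivity)] at hs1
    linarith
  have hD : (0:ℝ) < 1 + s + 2*(n:ℝ)*s := by nlinarith
  have hm0 : 0 < (4 - 4 * (n : ℝ) ^ 2 * s) / (1 + s + 2 * (n : ℝ) * s) := by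
    apply div_pos (by nlinarith)
    nlinarith
  -- lower bound for all members
  have hlow : ∀ r a b : ℝ, 0 ≤ r → a ∈ Set.Icc (0 : ℝ) 1 → b ∈ Set.Icc (0 : ℝ) 1 → a + b = 1 →
      (4 - 4 * (n : ℝ) ^ 2 * s) / (1 + s + 2 * (n : ℝ) * s) ≤ Khit n s r a b := by
    intro r a b hr ha hb hab
    have hb1 : b = 1 - a := by linarith [hab]
    subst hb1
    have := aux_lower (n:ℝ) s r a hN hs0 hs1' hr ha.1 ha.2
    simpa [Khit] using this
  have hup : ∀ r a b : ℝ, 0 ≤ r → a ∈ Set.Icc (0 : ℝ) 1 → b ∈ Set.Icc (0 : ℝ) 1 → a + b = 1 →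
      Khit n s r a b ≤ 4 / s := by
    intro r a b hr ha hb hab
    have hb1 : b = 1 - a := by linarith [hab]
    subst hb1
    have := aux_upper (n:ℝ) s r a hN hs0 hs1' hr ha.1 ha.2
    simpa [Khit] using this
  have h01 : ∀ r : ℝ, 0 ≤ r → Khit n s r 0 1 = 4 / s := by
    intro r hr
    simp [Khit]
  have hmem1 : (4/s) ∈ {K : ℝ | ∃ r a b : ℝ, 0 ≤ r ∧ a ∈ Set.Icc (0 : ℝ) 1 ∧
      b ∈ Set.Icc (0 : ℝ) 1 ∧ a + b = 1 ∧ K = Khit n s r a b} :=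
    ⟨0, 0, 1, le_refl 0, by norm_num, by norm_num, by norm_num, (h01 0 le_rfl).symm⟩
  have hne : {K : ℝ | ∃ r a b : ℝ, 0 ≤ r ∧ a ∈ Set.Icc (0 : ℝ) 1 ∧
      b ∈ Set.Icc (0 : ℝ) 1 ∧ a + b = 1 ∧ K = Khit n s r a b}.Nonempty := ⟨_, hmem1⟩
  have hbdd : BddBelow {K : ℝ | ∃ r a b : ℝ, 0 ≤ r ∧ a ∈ Set.Icc (0 : ℝ) 1 ∧
      b ∈ Set.Icc (0 : ℝ) 1 ∧ a + b = 1 ∧ K = Khit n s r a b} := by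
    refine ⟨(4 - 4 * (n : ℝ) ^ 2 * s) / (1 + s + 2 * (n : ℝ) * s), ?_⟩
    rintro x ⟨r, a, b, hr, ha, hb, hab, rfl⟩
    exact hlow r a b hr ha hb hab
  refine ⟨?_, ?_, ?_, h01⟩
  · intro r a b hr ha hb hab
    exact lt_of_lt_of_le hm0 (hlow r a b hr ha hb hab)
  · apply le_antisymm
    · apply le_of_forall_pos_le_add
      intro ε hε
      obtain ⟨r, hr, hK⟩ := aux_approx (n:ℝ) s ε hN hs0 hs1' hε
      have hA0 : (1+(n:ℝ)*s)/(1+s+2*(n:ℝ)*s) ∈ Set.Icc (0:ℝ) 1 := by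
        constructor
        · apply div_nonneg (by nlinarith) hD.le
        · rw [div_le_one hD]; nlinarith
      have hB0 : (s*((n:ℝ)+1))/(1+s+2*(n:ℝ)*s) ∈ Set.Icc (0:ℝ) 1 := by
        constructor
        · apply div_nonneg (by nlinarith) hD.le
        · rw [div_le_one hD]; nlinarith
      have hsum : (1+(n:ℝ)*s)/(1+s+2*(n:ℝ)*s) + (s*((n:ℝ)+1))/(1+s+2*(n:ℝ)*s) = 1 := by
        rw [← add_div, div_eq_one_iff_eq hD.ne']
        ring
      have hmem : Khit n s r ((1+(n:ℝ)*s)/(1+s+2*(n:ℝ)*s)) ((s*((n:ℝ)+1))/(1+s+2*(n:ℝ)*s)) ∈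
          {K : ℝ | ∃ r a b : ℝ, 0 ≤ r ∧ a ∈ Set.Icc (0 : ℝ) 1 ∧
            b ∈ Set.Icc (0 : ℝ) 1 ∧ a + b = 1 ∧ K = Khit n s r a b} :=
        ⟨r, _, _, hr, hA0, hB0, hsum, rfl⟩
      calc sInf _ ≤ Khit n s r ((1+(n:ℝ)*s)/(1+s+2*(n:ℝ)*s)) ((s*((n:ℝ)+1))/(1+s+2*(n:ℝ)*s)) :=
            csInf_le hbdd hmem
        _ ≤ (4 - 4 * (n : ℝ) ^ 2 * s) / (1 + s + 2 * (n : ℝ) * s) + ε := by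
            simpa [Khit] using hK
    · apply le_csInf hne
      rintro x ⟨r, a, b, hr, ha, hb, hab, rfl⟩
      exact hlow r a b hr ha hb hab
  · apply le_antisymm
    · apply csSup_le hne
      rintro x ⟨r, a, b, hr, ha, hb, hab, rfl⟩
      exact hup r a b hr ha hb hab
    · apply le_csSup ?_ hmem1
      refine ⟨4/s, ?_⟩
      rintro x ⟨r, a, b, hr, ha, hb, hab, rfl⟩
      exact hup r a b hr ha hb hab
end

section
/- Let n ≥ 2 be an integer and 0 < s < 1/n². Define f_s : [0,∞) → ℝ by f_s(r) = K_{r,s}(a₀(r), b₀(r)), where a₀(r) = (1+r)(1+ns)/D(r), b₀(r) = s(1−n+r+nr+ns−n²s)/D(r), D(r) = 1 + s − (n−1)ns² + r(1+s+2ns). Then for r ∈ (0,∞), f_s′(r) = 0 if and only if r = r₀ := (n−1)(1+ns)/(1+n), and f_s(r₀) = (4 − s(n−1)²)/(1+ns). -/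
/-- `D(r) = 1 + s − (n−1)ns² + r(1+s+2ns)`. -/
noncomputable def Dd (n : ℕ) (s r : ℝ) : ℝ :=
  1 + s - ((n : ℝ) - 1) * (n : ℝ) * s ^ 2 + r * (1 + s + 2 * (n : ℝ) * s)

/-- `a₀(r) = (1+r)(1+ns)/D(r)`. -/
noncomputable def a0 (n : ℕ) (s r : ℝ) : ℝ := (1 + r) * (1 + (n : ℝ) * s) / Dd n s r

/-- `b₀(r) = s(1−n+r+nr+ns−n²s)/D(r)`. -/
noncomputable def b0 (n : ℕ) (s r : ℝ) : ℝ :=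
  s * (1 - (n : ℝ) + r + (n : ℝ) * r + (n : ℝ) * s - (n : ℝ) ^ 2 * s) / Dd n s r

private lemma hasDerivAt_cubic (a b c d x : ℝ) :
    HasDerivAt (fun t : ℝ => a + b * t + c * t ^ 2 + d * t ^ 3)
      (b + 2 * c * x + 3 * d * x ^ 2) x := by
  have h := (((hasDerivAt_id x).const_mul b).const_add a).add
      (((hasDerivAt_pow 2 x).const_mul c).add ((hasDerivAt_pow 3 x).const_mul d))
  have hf : (fun t : ℝ => a + b * t + c * t ^ 2 + d * t ^ 3)
      = (fun x => a + b * id x) + ((fun y => c * y ^ 2) + fun y => d * y ^ 3) := by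
    funext t; simp only [id_eq, Pi.add_apply]; ring
  rw [hf]
  exact h.congr_deriv (by push_cast; ring)

private lemma ratsimp (A B an bn u D s P : ℝ) (hu : u ≠ 0) (hD : D ≠ 0) (hs : s ≠ 0)
    (hNum : (A * an ^ 2 + B * (an * bn)) * s + 4 * bn ^ 2 * u ^ 2 = P * D) :
    (A / u ^ 2) * (an / D) ^ 2 + (B / u ^ 2) * ((an / D) * (bn / D)) + (4 / s) * (bn / D) ^ 2
      = P / (s * u ^ 2 * D) := by
  have h : (A / u ^ 2) * (an / D) ^ 2 + (B / u ^ 2) * ((an / D) * (bn / D))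
      + (4 / s) * (bn / D) ^ 2
      = ((A * an ^ 2 + B * (an * bn)) * s + 4 * bn ^ 2 * u ^ 2) / (s * u ^ 2 * D ^ 2) := by
    field_simp
  rw [h, hNum]
  have h2 : s * u ^ 2 * D ^ 2 = (s * u ^ 2 * D) * D := by ring
  rw [h2, mul_div_mul_right _ _ hD]

private noncomputable def cP0 (n : ℕ) (s : ℝ) : ℝ :=
  4*s + 12*(n:ℝ)*s^2 - 4*(n:ℝ)^2*s^2 + 12*(n:ℝ)^2*s^3 - 8*(n:ℝ)^3*s^3 + 4*(n:ℝ)^3*s^4 - 4*(n:ℝ)^4*s^4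
private noncomputable def cP1 (n : ℕ) (s : ℝ) : ℝ := 12*s + 24*(n:ℝ)*s^2 + 12*(n:ℝ)^2*s^3
private noncomputable def cP2 (n : ℕ) (s : ℝ) : ℝ := 12*s + 12*(n:ℝ)*s^2
private noncomputable def cP3 (n : ℕ) (s : ℝ) : ℝ := 4*s - 4*(n:ℝ)^2*s^2
private noncomputable def cE0 (n : ℕ) (s : ℝ) : ℝ :=
  s + s^2 + 2*(n:ℝ)*s^2 + 3*(n:ℝ)*s^3 + 3*(n:ℝ)^2*s^4 - 2*(n:ℝ)^3*s^4 + (n:ℝ)^3*s^5 - (n:ℝ)^4*s^5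
private noncomputable def cE1 (n : ℕ) (s : ℝ) : ℝ :=
  3*s + 3*s^2 + 6*(n:ℝ)*s^2 + 6*(n:ℝ)*s^3 + 3*(n:ℝ)^2*s^3 + 3*(n:ℝ)^2*s^4
private noncomputable def cE2 (n : ℕ) (s : ℝ) : ℝ :=
  3*s + 3*s^2 + 6*(n:ℝ)*s^2 + 3*(n:ℝ)*s^3 + 3*(n:ℝ)^2*s^3
private noncomputable def cE3 (n : ℕ) (s : ℝ) : ℝ := s + s^2 + 2*(n:ℝ)*s^2

set_option maxHeartbeats 1000000 in
/-- For `n ≥ 2` and `0 < s < 1/n²`, the function `f_s(r) = K_{r,s}(a₀(r), b₀(r))` has, on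
`(0,∞)`, derivative zero exactly at `r₀ = (n−1)(1+ns)/(1+n)`, and
`f_s(r₀) = (4 − s(n−1)²)/(1+ns)`. -/
theorem stmt_4 (n : ℕ) (hn : 2 ≤ n) (s : ℝ) (hs0 : 0 < s) (hs1 : s < 1 / (n : ℝ) ^ 2) :
    (∀ r : ℝ, 0 < r →
      (deriv (fun t : ℝ => Khit n s t (a0 n s t) (b0 n s t)) r = 0 ↔
        r = ((n : ℝ) - 1) * (1 + (n : ℝ) * s) / (1 + (n : ℝ)))) ∧
    Khit n s (((n : ℝ) - 1) * (1 + (n : ℝ) * s) / (1 + (n : ℝ)))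
        (a0 n s (((n : ℝ) - 1) * (1 + (n : ℝ) * s) / (1 + (n : ℝ))))
        (b0 n s (((n : ℝ) - 1) * (1 + (n : ℝ) * s) / (1 + (n : ℝ))))
      = (4 - s * ((n : ℝ) - 1) ^ 2) / (1 + (n : ℝ) * s) := by
  have hn2 : (2 : ℝ) ≤ (n : ℝ) := by exact_mod_cast hn
  have hnpos : (0 : ℝ) < (n : ℝ) := by linarith
  have hsn2 : s * (n : ℝ) ^ 2 < 1 := by
    have h2 : (0 : ℝ) < (n : ℝ) ^ 2 := by positivity
    rw [div_eq_inv_mul, mul_one] at hs1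
    calc s * (n : ℝ) ^ 2 < ((n : ℝ) ^ 2)⁻¹ * (n : ℝ) ^ 2 :=
          mul_lt_mul_of_pos_right hs1 h2
      _ = 1 := inv_mul_cancel₀ (ne_of_gt h2)
  have hns : (0 : ℝ) < 1 + (n : ℝ) * s := by nlinarith
  have hDd : ∀ t : ℝ, 0 ≤ t → 0 < Dd n s t := by
    intro t ht
    rw [Dd]
    nlinarith [sq_nonneg s, mul_pos hs0 hs0,
      mul_nonneg ht (by nlinarith : (0:ℝ) ≤ 1 + s + 2 * (n:ℝ) * s)]
  have hu : ∀ t : ℝ, 0 ≤ t → 0 < 1 + t + (n : ℝ) * s := by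
    intro t ht; nlinarith
  -- the curvature along the curve equals an explicit rational function
  have hrat : ∀ t : ℝ, 0 ≤ t → Khit n s t (a0 n s t) (b0 n s t)
      = (cP0 n s + cP1 n s * t + cP2 n s * t ^ 2 + cP3 n s * t ^ 3)
        / (s * (1 + t + (n:ℝ) * s) ^ 2 * Dd n s t) := by
    intro t ht
    have h := ratsimp (4 * ((1 + t) ^ 2 + (n:ℝ) * s * (1 + t - (n:ℝ) * t)))
      (8 * (n:ℝ) * (1 + (n:ℝ) * s - t ^ 2)) ((1 + t) * (1 + (n:ℝ) * s))
      (s * (1 - (n:ℝ) + t + (n:ℝ) * t + (n:ℝ) * s - (n:ℝ) ^ 2 * s))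
      (1 + t + (n:ℝ) * s) (Dd n s t) s
      (cP0 n s + cP1 n s * t + cP2 n s * t ^ 2 + cP3 n s * t ^ 3)
      (hu t ht).ne' (hDd t ht).ne' hs0.ne'
      (by simp only [cP0, cP1, cP2, cP3, Dd]; ring)
    simp only [Khit, a0, b0]
    exact h
  have hE : ∀ t : ℝ, cE0 n s + cE1 n s * t + cE2 n s * t ^ 2 + cE3 n s * t ^ 3
      = s * (1 + t + (n:ℝ) * s) ^ 2 * Dd n s t := by
    intro t; simp only [cE0, cE1, cE2, cE3, Dd]; ring
  have hEne : ∀ t : ℝ, 0 ≤ t →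
      cE0 n s + cE1 n s * t + cE2 n s * t ^ 2 + cE3 n s * t ^ 3 ≠ 0 := by
    intro t ht
    rw [hE t]
    exact (mul_pos (mul_pos hs0 (pow_pos (hu t ht) 2)) (hDd t ht)).ne'
  constructor
  · intro r hr
    have hr' : (0:ℝ) ≤ r := le_of_lt hr
    have hev : (fun t : ℝ => Khit n s t (a0 n s t) (b0 n s t)) =ᶠ[nhds r]
        (fun t : ℝ => (cP0 n s + cP1 n s * t + cP2 n s * t ^ 2 + cP3 n s * t ^ 3)
          / (cE0 n s + cE1 n s * t + cE2 n s * t ^ 2 + cE3 n s * t ^ 3)) := by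
      filter_upwards [isOpen_Ioi.mem_nhds hr] with t ht
      have ht' : (0:ℝ) ≤ t := le_of_lt (Set.mem_Ioi.mp ht)
      rw [hE t]
      exact hrat t ht'
    have hP := hasDerivAt_cubic (cP0 n s) (cP1 n s) (cP2 n s) (cP3 n s) r
    have hEd := hasDerivAt_cubic (cE0 n s) (cE1 n s) (cE2 n s) (cE3 n s) r
    have hQne := hEne r hr'
    have hdiv := hP.div hEd hQne
    rw [hev.deriv_eq]; erw [hdiv.deriv]
    have key : (cP1 n s + 2 * cP2 n s * r + 3 * cP3 n s * r ^ 2)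
          * (cE0 n s + cE1 n s * r + cE2 n s * r ^ 2 + cE3 n s * r ^ 3)
        - (cP0 n s + cP1 n s * r + cP2 n s * r ^ 2 + cP3 n s * r ^ 3)
          * (cE1 n s + 2 * cE2 n s * r + 3 * cE3 n s * r ^ 2)
        = (1 + r + (n:ℝ) * s) * ((1 + (n:ℝ)) * r - ((n:ℝ) - 1) * (1 + (n:ℝ) * s))
          * (-12 * (n:ℝ) * s ^ 3 * (1 + r) ^ 2 * (1 + (n:ℝ) * s) ^ 2) := by
      simp only [cP0, cP1, cP2, cP3, cE0, cE1, cE2, cE3]; ring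
    rw [div_eq_zero_iff]
    have hsq : (cE0 n s + cE1 n s * r + cE2 n s * r ^ 2 + cE3 n s * r ^ 3) ^ 2 ≠ 0 :=
      pow_ne_zero 2 hQne
    have hupos := hu r hr'
    have hfac : (-12 * (n:ℝ) * s ^ 3 * (1 + r) ^ 2 * (1 + (n:ℝ) * s) ^ 2) ≠ 0 := by
      have h : (0:ℝ) < 12 * (n:ℝ) * s ^ 3 * (1 + r) ^ 2 * (1 + (n:ℝ) * s) ^ 2 := by positivity
      intro hc; nlinarith
    have h1n : (0:ℝ) < 1 + (n:ℝ) := by linarith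
    constructor
    · rintro (h | h)
      · rw [key] at h
        rcases mul_eq_zero.mp h with h' | h'
        · rcases mul_eq_zero.mp h' with h'' | h''
          · exact absurd h'' hupos.ne'
          · rw [eq_div_iff h1n.ne']
            linarith
        · exact absurd h' hfac
      · exact absurd h hsq
    · intro h
      left
      rw [key, h]
      have hz : (1 + (n:ℝ)) * (((n:ℝ) - 1) * (1 + (n:ℝ) * s) / (1 + (n:ℝ)))
          - ((n:ℝ) - 1) * (1 + (n:ℝ) * s) = 0 := by
        field_simp
        ring
      rw [hz]
      ring
  · have h1n : (0:ℝ) < 1 + (n:ℝ) := by linarith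
    have hr0 : (0:ℝ) ≤ ((n:ℝ) - 1) * (1 + (n:ℝ) * s) / (1 + (n:ℝ)) := by
      apply div_nonneg
      · apply mul_nonneg <;> nlinarith
      · exact le_of_lt h1n
    rw [hrat _ hr0]
    have hQ : s * (1 + ((n:ℝ) - 1) * (1 + (n:ℝ) * s) / (1 + (n:ℝ)) + (n:ℝ) * s) ^ 2
        * Dd n s (((n:ℝ) - 1) * (1 + (n:ℝ) * s) / (1 + (n:ℝ))) ≠ 0 :=
      (mul_pos (mul_pos hs0 (pow_pos (hu _ hr0) 2)) (hDd _ hr0)).ne'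
    rw [div_eq_div_iff hQ hns.ne']
    simp only [cP0, cP1, cP2, cP3, Dd]
    field_simp
    ring
end

section
/- For n = 1 and s = 1/3, the infimum of K_{r,s}(a,b) over all r ≥ 0 and a, b ∈ [0,1] with a + b = 1 equals 4/3, the supremum equals 12, and the ratio of infimum to supremum equals 1/9. (This is the optimal pinching constant for Hitchin's metrics on the first Hirzebruch surface.) -/
lemma Khit_lb (r a b : ℝ) (hr : 0 ≤ r) (ha : a ∈ Set.Icc (0:ℝ) 1)
    (hb : b ∈ Set.Icc (0:ℝ) 1) (hab : a + b = 1) : 4 / 3 ≤ Khit 1 (1/3) r a b := by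
  obtain ⟨ha0, ha1⟩ := ha
  have hd : (0:ℝ) < (1 + r + (1:ℕ) * (1/3)) ^ 2 := by positivity
  rw [← sub_nonneg]
  have key : Khit 1 (1/3) r a b - 4/3 =
      (4 * ((1+r)^2 + 1/3) * a^2 + 8 * (4/3 - r^2) * (a*b) + (12*b^2 - 4/3) * (1 + r + 1/3)^2)
        / (1 + r + (1:ℕ) * (1/3)) ^ 2 := by
    rw [Khit]
    push_cast
    field_simp
    ring
  rw [key]
  apply div_nonneg _ (le_of_lt hd)
  have hb' : b = 1 - a := by linarith
  subst hb'
  nlinarith [sq_nonneg (r*(3*a-2)), mul_nonneg hr (sq_nonneg (5*a-4)), sq_nonneg (a-1), hr, mul_nonneg hr hr]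

lemma Khit_ub (r a b : ℝ) (hr : 0 ≤ r) (ha : a ∈ Set.Icc (0:ℝ) 1)
    (hb : b ∈ Set.Icc (0:ℝ) 1) (hab : a + b = 1) : Khit 1 (1/3) r a b ≤ 12 := by
  obtain ⟨ha0, ha1⟩ := ha
  have hd : (0:ℝ) < (1 + r + (1:ℕ) * (1/3)) ^ 2 := by positivity
  rw [← sub_nonneg]
  have key : 12 - Khit 1 (1/3) r a b =
      (12 * (1 + r + 1/3)^2 - (4 * ((1+r)^2 + 1/3) * a^2 + 8 * (4/3 - r^2) * (a*b)
        + 12*b^2 * (1 + r + 1/3)^2)) / (1 + r + (1:ℕ) * (1/3)) ^ 2 := by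
    rw [Khit]
    push_cast
    field_simp
    ring
  rw [key]
  apply div_nonneg _ (le_of_lt hd)
  have hb' : b = 1 - a := by linarith
  subst hb'
  have h1 : 0 ≤ a * (1 - a) := mul_nonneg ha0 (by linarith)
  nlinarith [mul_nonneg (mul_nonneg hr hr) h1, mul_nonneg hr h1, h1,
    mul_nonneg (mul_nonneg hr hr) ha0, mul_nonneg hr ha0]

lemma Khit_val (r : ℝ) (hr : 0 ≤ r) :
    Khit 1 (1/3) r (2/3) (1/3) = 4/3 + 32 / (9 * (r + 4/3)) := by
  have h1 : (1 + r + (1:ℕ) * (1/3) : ℝ) ≠ 0 := by push_cast; linarith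
  have h2 : (9 * (r + 4/3) : ℝ) ≠ 0 := by linarith
  rw [Khit]
  push_cast at h1 ⊢
  field_simp
  ring

/-- For `n = 1` and `s = 1/3`, the infimum of `K_{r,s}(a,b)` over all `r ≥ 0` and
`a, b ∈ [0,1]` with `a + b = 1` equals `4/3`, the supremum equals `12`, and the ratio of
infimum to supremum equals `1/9`. -/
theorem stmt_11 :
    sInf {K : ℝ | ∃ r a b : ℝ, 0 ≤ r ∧ a ∈ Set.Icc (0 : ℝ) 1 ∧ b ∈ Set.Icc (0 : ℝ) 1 ∧
        a + b = 1 ∧ K = Khit 1 (1 / 3) r a b} = 4 / 3 ∧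
    sSup {K : ℝ | ∃ r a b : ℝ, 0 ≤ r ∧ a ∈ Set.Icc (0 : ℝ) 1 ∧ b ∈ Set.Icc (0 : ℝ) 1 ∧
        a + b = 1 ∧ K = Khit 1 (1 / 3) r a b} = 12 ∧
    (4 / 3 : ℝ) / 12 = 1 / 9 := by
  set S := {K : ℝ | ∃ r a b : ℝ, 0 ≤ r ∧ a ∈ Set.Icc (0 : ℝ) 1 ∧ b ∈ Set.Icc (0 : ℝ) 1 ∧
        a + b = 1 ∧ K = Khit 1 (1 / 3) r a b} with hS
  have hlb : ∀ x ∈ S, 4/3 ≤ x := by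
    rintro x ⟨r, a, b, hr, ha, hb, hab, rfl⟩
    exact Khit_lb r a b hr ha hb hab
  have hub : ∀ x ∈ S, x ≤ 12 := by
    rintro x ⟨r, a, b, hr, ha, hb, hab, rfl⟩
    exact Khit_ub r a b hr ha hb hab
  have h12 : (12:ℝ) ∈ S := by
    refine ⟨0, 0, 1, le_refl 0, by norm_num, by norm_num, by norm_num, ?_⟩
    rw [Khit]; norm_num
  have hbdd : BddBelow S := ⟨4/3, hlb⟩
  refine ⟨?_, ?_, by norm_num⟩
  · refine le_antisymm ?_ (le_csInf ⟨12, h12⟩ hlb)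
    apply le_of_forall_pos_le_add
    intro ε hε
    set r := 32 / (9 * ε) with hrdef
    have hr : 0 ≤ r := by positivity
    have hmem : Khit 1 (1/3) r (2/3) (1/3) ∈ S :=
      ⟨r, 2/3, 1/3, hr, by norm_num, by norm_num, by norm_num, rfl⟩
    calc sInf S ≤ Khit 1 (1/3) r (2/3) (1/3) := csInf_le hbdd hmem
      _ = 4/3 + 32 / (9 * (r + 4/3)) := Khit_val r hr
      _ ≤ 4/3 + ε := by
          have h9 : (0:ℝ) < 9 * (r + 4/3) := by linarith
          have : 32 / (9 * (r + 4/3)) ≤ ε := by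
            rw [div_le_iff₀ h9, hrdef]
            have : 9 * (32 / (9 * ε)) = 32 / ε := by field_simp
            rw [mul_comm, mul_add, this]
            have : ε * (32 / ε) = 32 := by field_simp
            nlinarith [hε.le]
          linarith
  · exact IsGreatest.csSup_eq ⟨h12, hub⟩
end

section
/- Let k > 0 and c_M, c_N ∈ (0,1] be real numbers, and let A, B, y be real numbers with k·c_M ≤ A ≤ k, k·c_N ≤ B ≤ k, and 0 ≤ y ≤ 1. Then k·c_M·c_N/(c_M + c_N) ≤ A·y² + B·(1−y)² ≤ k. (This is the analytic core of the theorem that the product metric on the product M × N of two Hermitian manifolds with c_M- and c_N-pinched positive holomorphic sectional curvatures bounded between k·c_M and k, respectively k·c_N and k, has holomorphic sectional curvature between k·c_M·c_N/(c_M+c_N) and k, where A and B are the holomorphic sectional curvatures of the two factors along the projected directions and y is the squared norm of the projection of a unit tangent vector to the first factor.) -/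
/-- If `k·c_M ≤ A ≤ k`, `k·c_N ≤ B ≤ k` and `0 ≤ y ≤ 1`, with `k > 0` and
`c_M, c_N ∈ (0,1]`, then `k·c_M·c_N/(c_M+c_N) ≤ A·y² + B·(1−y)² ≤ k`. -/
theorem stmt_14 (k cM cN A B y : ℝ) (hk : 0 < k)
    (hcM : cM ∈ Set.Ioc (0 : ℝ) 1) (hcN : cN ∈ Set.Ioc (0 : ℝ) 1)
    (hA1 : k * cM ≤ A) (hA2 : A ≤ k) (hB1 : k * cN ≤ B) (hB2 : B ≤ k)
    (hy0 : 0 ≤ y) (hy1 : y ≤ 1) :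
    k * cM * cN / (cM + cN) ≤ A * y ^ 2 + B * (1 - y) ^ 2 ∧
    A * y ^ 2 + B * (1 - y) ^ 2 ≤ k := by
  obtain ⟨hM0, hM1⟩ := hcM
  obtain ⟨hN0, hN1⟩ := hcN
  have hsum : 0 < cM + cN := by linarith
  constructor
  · rw [div_le_iff₀ hsum]
    nlinarith [sq_nonneg ((cM + cN) * y - cN), sq_nonneg y, sq_nonneg (1 - y),
      mul_nonneg (sq_nonneg y) hM0.le, mul_nonneg (sq_nonneg (1 - y)) hN0.le,
      mul_le_mul_of_nonneg_right hA1 (sq_nonneg y),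
      mul_le_mul_of_nonneg_right hB1 (sq_nonneg (1 - y))]
  · nlinarith [mul_nonneg hy0 (sub_nonneg.2 hy1),
      mul_le_mul_of_nonneg_right hA2 (sq_nonneg y),
      mul_le_mul_of_nonneg_right hB2 (sq_nonneg (1 - y))]
end

section
/- Let n ≥ 1 be an integer and 0 < s < 1/n², and let f_s(r) = K_{r,s}(a₀(r), b₀(r)) with a₀, b₀, D as in the stationary-point formulas (a₀(r) = (1+r)(1+ns)/D(r), b₀(r) = s(1−n+r+nr+ns−n²s)/D(r), D(r) = 1+s−(n−1)ns²+r(1+s+2ns)). Then for every r ≥ 0, f_s(r) > (4−4n²s)/(1+s+2ns); that is, the limiting value of f_s at infinity is a strict lower bound for f_s on [0,∞). -/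
set_option maxHeartbeats 1600000 in
lemma keyid17 (n : ℕ) (s r : ℝ) (hs : s ≠ 0)
    (hE : 1 + r + (n:ℝ) * s ≠ 0) (hD : Dd n s r ≠ 0) (hT : 1 + s + 2 * (n:ℝ) * s ≠ 0) :
    Khit n s r (a0 n s r) (b0 n s r) - (4 - 4 * (n:ℝ) ^ 2 * s) / (1 + s + 2 * (n:ℝ) * s)
      = ((1 + s + 2 * (n:ℝ) * s) * (s * ((4 * ((1 + r) ^ 2 + (n:ℝ) * s * (1 + r - (n:ℝ) * r))) * ((1 + r) * (1 + (n:ℝ) * s)) ^ 2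
      + (8 * (n:ℝ) * (1 + (n:ℝ) * s - r ^ 2)) * ((1 + r) * (1 + (n:ℝ) * s)) * (s * (1 - (n:ℝ) + r + (n:ℝ) * r + (n:ℝ) * s - (n:ℝ) ^ 2 * s)))
      + 4 * (1 + r + (n:ℝ) * s) ^ 2 * (s * (1 - (n:ℝ) + r + (n:ℝ) * r + (n:ℝ) * s - (n:ℝ) ^ 2 * s)) ^ 2)
    - (4 - 4 * (n:ℝ) ^ 2 * s) * (s * (1 + r + (n:ℝ) * s) ^ 2 * (Dd n s r) ^ 2))
        / (s * (1 + r + (n:ℝ) * s) ^ 2 * (Dd n s r) ^ 2 * (1 + s + 2 * (n:ℝ) * s)) := by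
  unfold Khit a0 b0
  have hT' : 1 + s + (n:ℝ) * s * 2 ≠ 0 := by contrapose! hT; linarith
  field_simp

set_option maxHeartbeats 1600000 in
lemma facteq17 (n : ℕ) (s r : ℝ) :
    ((1 + s + 2 * (n:ℝ) * s) * (s * ((4 * ((1 + r) ^ 2 + (n:ℝ) * s * (1 + r - (n:ℝ) * r))) * ((1 + r) * (1 + (n:ℝ) * s)) ^ 2
      + (8 * (n:ℝ) * (1 + (n:ℝ) * s - r ^ 2)) * ((1 + r) * (1 + (n:ℝ) * s)) * (s * (1 - (n:ℝ) + r + (n:ℝ) * r + (n:ℝ) * s - (n:ℝ) ^ 2 * s)))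
      + 4 * (1 + r + (n:ℝ) * s) ^ 2 * (s * (1 - (n:ℝ) + r + (n:ℝ) * r + (n:ℝ) * s - (n:ℝ) ^ 2 * s)) ^ 2)
    - (4 - 4 * (n:ℝ) ^ 2 * s) * (s * (1 + r + (n:ℝ) * s) ^ 2 * (Dd n s r) ^ 2))
      = (n:ℝ) * s ^ 2 * (1 + (n:ℝ) * s) ^ 2 * Dd n s r * (12 + 24 * r + 12 * r ^ 2 + 12 * (n:ℝ) * r + 12 * (n:ℝ) * r ^ 2 + 12 * (n:ℝ) * s + 12 * (n:ℝ) * s * r - 8 * (n:ℝ) ^ 2 * s + 4 * (n:ℝ) ^ 2 * s ^ 2 - 4 * (n:ℝ) ^ 3 * s ^ 2) := by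
  unfold Dd
  ring

/-- For `n ≥ 1` and `0 < s < 1/n²`, the function `f_s(r) = K_{r,s}(a₀(r), b₀(r))` satisfies
`f_s(r) > (4−4n²s)/(1+s+2ns)` for every `r ≥ 0`. -/
theorem stmt_17 (n : ℕ) (hn : 1 ≤ n) (s : ℝ) (hs0 : 0 < s) (hs1 : s < 1 / (n : ℝ) ^ 2) :
    ∀ r : ℝ, 0 ≤ r →
      (4 - 4 * (n : ℝ) ^ 2 * s) / (1 + s + 2 * (n : ℝ) * s)
        < Khit n s r (a0 n s r) (b0 n s r) := by
  intro r hr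
  have hx : (1:ℝ) ≤ (n:ℝ) := by exact_mod_cast hn
  have hx0 : (0:ℝ) < (n:ℝ) := lt_of_lt_of_le one_pos hx
  have hw : 0 < (n:ℝ) ^ 2 * s := by positivity
  have hu : 0 < 1 - (n:ℝ) ^ 2 * s := by
    have h2 : (0:ℝ) < (n:ℝ) ^ 2 := by positivity
    have := (lt_div_iff₀ h2).mp hs1
    linarith
  have hT : 0 < 1 + s + 2 * (n:ℝ) * s := by nlinarith
  have hE : 0 < 1 + r + (n:ℝ) * s := by nlinarith
  have hD : 0 < Dd n s r := by
    unfold Dd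
    have h1 : ((n:ℝ) - 1) * (n:ℝ) * s ^ 2 ≤ (n:ℝ) ^ 2 * s * s := by nlinarith
    nlinarith [mul_nonneg hr hT.le]
  have hR : 0 < (12 + 24 * r + 12 * r ^ 2 + 12 * (n:ℝ) * r + 12 * (n:ℝ) * r ^ 2 + 12 * (n:ℝ) * s + 12 * (n:ℝ) * s * r - 8 * (n:ℝ) ^ 2 * s + 4 * (n:ℝ) ^ 2 * s ^ 2 - 4 * (n:ℝ) ^ 3 * s ^ 2) := by
    have h3 : (n:ℝ) ^ 3 * s ^ 2 ≤ ((n:ℝ) ^ 2 * s) * ((n:ℝ) ^ 2 * s) := by nlinarith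
    have h4 : ((n:ℝ) ^ 2 * s) * ((n:ℝ) ^ 2 * s) < 1 := by nlinarith
    nlinarith [mul_nonneg hr hr, mul_nonneg (mul_nonneg hx0.le hs0.le) hr,
      mul_nonneg hx0.le hr, mul_nonneg (mul_nonneg hx0.le hr) hr, sq_nonneg ((n:ℝ) * s)]
  have key := keyid17 n s r hs0.ne' hE.ne' hD.ne' hT.ne'
  rw [facteq17 n s r] at key
  have hfin : 0 < (n:ℝ) * s ^ 2 * (1 + (n:ℝ) * s) ^ 2 * Dd n s r * (12 + 24 * r + 12 * r ^ 2 + 12 * (n:ℝ) * r + 12 * (n:ℝ) * r ^ 2 + 12 * (n:ℝ) * s + 12 * (n:ℝ) * s * r - 8 * (n:ℝ) ^ 2 * s + 4 * (n:ℝ) ^ 2 * s ^ 2 - 4 * (n:ℝ) ^ 3 * s ^ 2)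
      / (s * (1 + r + (n:ℝ) * s) ^ 2 * (Dd n s r) ^ 2 * (1 + s + 2 * (n:ℝ) * s)) := by
    positivity
  rw [← key] at hfin
  linarith
end

section
/- Let n ≥ 2 be an integer and 0 < s < 1/n², and let h_s(r) = 4((1+r)² + ns(1+r−nr))/(1+r+ns)². Then for every r ≥ 0, (4−s(n−1)²)/(1+ns) ≤ h_s(r) < 4; that is, the minimum of h_s on [0,∞) is its critical value (4−s(n−1)²)/(1+ns) and its supremum is its limiting value 4 at infinity, which is not attained. -/
/-- For `n ≥ 2` and `0 < s < 1/n²`, the horizontal curvature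
`h_s(r) = 4((1+r)² + ns(1+r−nr))/(1+r+ns)²` satisfies
`(4−s(n−1)²)/(1+ns) ≤ h_s(r) < 4` for every `r ≥ 0`. -/
theorem stmt_18 (n : ℕ) (hn : 2 ≤ n) (s : ℝ) (hs0 : 0 < s) (hs1 : s < 1 / (n : ℝ) ^ 2) :
    ∀ r : ℝ, 0 ≤ r →
      (4 - s * ((n : ℝ) - 1) ^ 2) / (1 + (n : ℝ) * s)
        ≤ 4 * ((1 + r) ^ 2 + (n : ℝ) * s * (1 + r - (n : ℝ) * r))
            / (1 + r + (n : ℝ) * s) ^ 2 ∧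
      4 * ((1 + r) ^ 2 + (n : ℝ) * s * (1 + r - (n : ℝ) * r))
          / (1 + r + (n : ℝ) * s) ^ 2 < 4 := by
  intro r hr
  have hn2 : (2:ℝ) ≤ (n:ℝ) := by exact_mod_cast hn
  have hns : 0 < (n:ℝ) * s := by positivity
  have hd : 0 < 1 + r + (n:ℝ) * s := by linarith
  have hd2 : 0 < (1 + r + (n:ℝ) * s) ^ 2 := by positivity
  have h1 : 0 < 1 + (n:ℝ) * s := by linarith
  constructor
  · rw [div_le_div_iff₀ h1 hd2]
    have key : 4 * ((1 + r) ^ 2 + (n:ℝ) * s * (1 + r - (n:ℝ) * r)) * (1 + (n:ℝ) * s)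
        - (4 - s * ((n:ℝ) - 1) ^ 2) * (1 + r + (n:ℝ) * s) ^ 2
        = s * (((n:ℝ) + 1) * r - ((n:ℝ) - 1) * (1 + (n:ℝ) * s)) ^ 2 := by ring
    have hnn : 0 ≤ s * (((n:ℝ) + 1) * r - ((n:ℝ) - 1) * (1 + (n:ℝ) * s)) ^ 2 :=
      mul_nonneg hs0.le (sq_nonneg _)
    linarith
  · rw [div_lt_iff₀ hd2]
    have key : 4 * (1 + r + (n:ℝ) * s) ^ 2
        - 4 * ((1 + r) ^ 2 + (n:ℝ) * s * (1 + r - (n:ℝ) * r))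
        = 4 * ((n:ℝ) * s * (1 + r) + ((n:ℝ) * s) ^ 2 + (n:ℝ) * ((n:ℝ) * s) * r) := by
      ring
    have h2 : 0 < (n:ℝ) * s * (1 + r) := by positivity
    have h3 : 0 ≤ (n:ℝ) * ((n:ℝ) * s) * r := by positivity
    nlinarith [sq_nonneg ((n:ℝ) * s)]
end

section
/- For every integer n ≥ 1 and every real s with 0 < s < 1/n², the ratio of the infimum to the supremum of K_{r,s}(a,b) over all r ≥ 0 and a, b ∈ [0,1] with a + b = 1 equals p(s) = s(1−n²s)/(1+s+2ns), and p(s) ≤ 1/(1+2n)² with equality if and only if s = 1/(2n²+n). (Thus the pinching constant 1/(1+2n)² is optimal within Hitchin's family of metrics ω_s on the n-th Hirzebruch surface.) -/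
lemma lowP1 (n s a b : ℝ) (hn : 1 ≤ n) (hs0 : 0 < s) (hs1 : n^2*s < 1) :
    0 ≤ 2*(s*(1+n)*a-(1+n*s)*b)^2*(1+n*s) + n*s*(1+s+2*n*s)*a*(4*(1+n*s)*b - s*(1+n)*a) := by
  have hn0 : (0:ℝ) ≤ n := le_trans zero_le_one hn
  have hrem : (0:ℝ) ≤ (1+n)*(2+n+n*s)*(1+n*s) - 2*(1-n^2*s)^2 := by
    nlinarith [sq_nonneg (1-n^2*s), mul_nonneg (mul_nonneg hs0.le hs0.le) (sq_nonneg n),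
      mul_nonneg hn0 hs0.le]
  have key : (0:ℝ) ≤ (8*(1+n*s)^3) * (2*(s*(1+n)*a-(1+n*s)*b)^2*(1+n*s)
      + n*s*(1+s+2*n*s)*a*(4*(1+n*s)*b - s*(1+n)*a)) := by
    nlinarith [sq_nonneg (2*(2*(1+n*s)^3)*b + (-4*s*(1+n*s)*(1-n^2*s))*a),
      mul_nonneg (mul_nonneg (by positivity : (0:ℝ) ≤ 8*s^2*(1+n*s)^2) hrem) (sq_nonneg a)]
  have hpos : (0:ℝ) < 8*(1+n*s)^3 := by positivity
  exact nonneg_of_mul_nonneg_right key hpos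

lemma lowP0 (n s a b : ℝ) (hn : 1 ≤ n) (hs0 : 0 < s)
    (ha : 0 ≤ a) (hb : 0 ≤ b) :
    0 ≤ (s*(1+n)*a-(1+n*s)*b)^2*(1+n*s) + n*s*(1+s+2*n*s)*a*((4+2*n*s)*b - s*a) := by
  have hn0 : (0:ℝ) ≤ n := le_trans zero_le_one hn
  have h1 : (0:ℝ) ≤ s^2*(1+n+n^2+n^3*s) * a^2 := by positivity
  have h2 : (0:ℝ) ≤ 2*s*((n-1) + 3*n^2*s + n^3*s^2) * (a*b) := by
    refine mul_nonneg ?_ (mul_nonneg ha hb)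
    have h3 : (0:ℝ) ≤ s*(n-1) := mul_nonneg hs0.le (by linarith)
    have h4 : (0:ℝ) ≤ n^2*s^2 := by positivity
    have h5 : (0:ℝ) ≤ n^3*s^3 := by positivity
    nlinarith [h3, h4, h5]
  have h3 : (0:ℝ) ≤ (1+n*s)^3 * b^2 := by positivity
  nlinarith [h1, h2, h3]

lemma lowT (n s r a b : ℝ) (hn : 1 ≤ n) (hs0 : 0 < s) (hs1 : n^2*s < 1)
    (hr : 0 ≤ r) (ha : 0 ≤ a) (hb : 0 ≤ b) :
    0 ≤ 4*(s*(1+n)*a - (1+n*s)*b)^2*(1+r+n*s)^2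
      + 4*n*s*(1+s+2*n*s)*a*(r*(3*(1+n*s)*b - (s*(1+n)*a - (1+n*s)*b))
        + (1+n*s)*((4+2*n*s)*b - s*a)) := by
  have hn0 : (0:ℝ) ≤ n := le_trans zero_le_one hn
  have hns : (0:ℝ) ≤ 1 + n*s := by nlinarith
  have h1 := lowP1 n s a b hn hs0 hs1
  have h0 := lowP0 n s a b hn hs0 ha hb
  nlinarith [mul_nonneg (mul_nonneg hr hr) (sq_nonneg (s*(1+n)*a - (1+n*s)*b)),
    mul_nonneg hr h1, mul_nonneg hns h0]

lemma Khit_ge (n s r a b : ℝ) (hn : 1 ≤ n) (hs0 : 0 < s) (hs1 : n^2*s < 1)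
    (hr : 0 ≤ r) (ha : 0 ≤ a) (hb : 0 ≤ b) (hab : a + b = 1) :
    4*(1-n^2*s)/(1+s+2*n*s) ≤
      (4 * ((1 + r) ^ 2 + n * s * (1 + r - n * r)) / (1 + r + n * s) ^ 2) * a ^ 2
      + (8 * n * (1 + n * s - r ^ 2) / (1 + r + n * s) ^ 2) * (a * b) + (4 / s) * b ^ 2 := by
  have hb' : b = 1 - a := by linarith
  subst hb'
  have hn0 : (0:ℝ) ≤ n := le_trans zero_le_one hn
  have hd : (0:ℝ) < 1 + r + n*s := by nlinarith
  have hE : (0:ℝ) < 1 + s + 2*n*s := by nlinarith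
  have hT := lowT n s r a (1-a) hn hs0 hs1 hr ha hb
  rw [← sub_nonneg]
  have hid : (4 * ((1 + r) ^ 2 + n * s * (1 + r - n * r)) / (1 + r + n * s) ^ 2) * a ^ 2
      + (8 * n * (1 + n * s - r ^ 2) / (1 + r + n * s) ^ 2) * (a * (1-a)) + (4 / s) * (1-a) ^ 2
      - 4*(1-n^2*s)/(1+s+2*n*s)
      = (4*(s*(1+n)*a - (1+n*s)*(1-a))^2*(1+r+n*s)^2
        + 4*n*s*(1+s+2*n*s)*a*(r*(3*(1+n*s)*(1-a) - (s*(1+n)*a - (1+n*s)*(1-a)))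
          + (1+n*s)*((4+2*n*s)*(1-a) - s*a)))
        / (s*(1+r+n*s)^2*(1+s+2*n*s)) := by
    field_simp
    ring
  rw [hid]
  exact div_nonneg hT (by positivity)

lemma Khit_le (n s r a b : ℝ) (hn : 1 ≤ n) (hs0 : 0 < s) (hs1 : n^2*s < 1)
    (hr : 0 ≤ r) (ha : 0 ≤ a) (hb : 0 ≤ b) (hab : a + b = 1) :
    (4 * ((1 + r) ^ 2 + n * s * (1 + r - n * r)) / (1 + r + n * s) ^ 2) * a ^ 2
      + (8 * n * (1 + n * s - r ^ 2) / (1 + r + n * s) ^ 2) * (a * b) + (4 / s) * b ^ 2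
      ≤ 4 / s := by
  have hb' : b = 1 - a := by linarith
  subst hb'
  have hn0 : (0:ℝ) ≤ n := le_trans zero_le_one hn
  have hd : (0:ℝ) < 1 + r + n*s := by nlinarith
  have ha1 : a ≤ 1 := by linarith
  have hW : 0 ≤ (1+r+n*s)^2*(2-a) - s*((1+r)^2+n*s*(1+r-n*r))*a - 2*n*s*(1+n*s-r^2)*(1-a) := by
    have hs' : s < 1 := by nlinarith
    have hsa1 : s*a ≤ 1 := by nlinarith [mul_nonneg (by linarith : (0:ℝ) ≤ 1 - s) ha]
    have hc2 : (0:ℝ) ≤ (2-a) - s*a + 2*n*s*(1-a) := by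
      nlinarith [mul_nonneg (mul_nonneg hn0 hs0.le) hb]
    have hc1 : (0:ℝ) ≤ 2*(1+n*s)*(2-a) - 2*s*a - n*s^2*a + n^2*s^2*a := by
      nlinarith [mul_nonneg (mul_nonneg hn0 hs0.le) (by linarith : (0:ℝ) ≤ 2 - a),
        mul_nonneg (mul_nonneg (mul_nonneg hn0 hs0.le) ha) (by linarith : (0:ℝ) ≤ 1 - s),
        mul_nonneg (mul_nonneg (mul_nonneg hn0 (mul_nonneg hn0 hs0.le)) hs0.le) ha]
    have hc0 : (0:ℝ) ≤ (1+n*s)*(2 - a + n*s*a - s*a) := by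
      refine mul_nonneg (by nlinarith) ?_
      nlinarith [mul_nonneg (mul_nonneg hn0 hs0.le) ha]
    nlinarith [mul_nonneg (mul_nonneg hr hr) hc2, mul_nonneg hr hc1, hc0]
  rw [← sub_nonneg]
  have hid : 4 / s - ((4 * ((1 + r) ^ 2 + n * s * (1 + r - n * r)) / (1 + r + n * s) ^ 2) * a ^ 2
      + (8 * n * (1 + n * s - r ^ 2) / (1 + r + n * s) ^ 2) * (a * (1-a)) + (4 / s) * (1-a) ^ 2)
      = (4*a*((1+r+n*s)^2*(2-a) - s*((1+r)^2+n*s*(1+r-n*r))*a - 2*n*s*(1+n*s-r^2)*(1-a)))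
        / (s*(1+r+n*s)^2) := by
    field_simp
    ring
  rw [hid]
  exact div_nonneg (by positivity) (by positivity)

lemma Kdecomp (n s r a b : ℝ) (hs : s ≠ 0) (hd : 1+r+n*s ≠ 0) :
    (4 * ((1 + r) ^ 2 + n * s * (1 + r - n * r)) / (1 + r + n * s) ^ 2) * a ^ 2
      + (8 * n * (1 + n * s - r ^ 2) / (1 + r + n * s) ^ 2) * (a * b) + (4 / s) * b ^ 2
    = (4*a^2 - 8*n*(a*b) + (4/s)*b^2)
      + (-4*n*s*(1+n)*a^2 + 16*n*(1+n*s)*(a*b)) * (1/(1+r+n*s))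
      + (4*n*s*(n+n^2*s)*a^2 - 8*n^2*s*(1+n*s)*(a*b)) * (1/(1+r+n*s))^2 := by
  field_simp
  ring

open Filter Topology

/-- For every integer `n ≥ 1` and `0 < s < 1/n²`, the ratio of the infimum to the supremum of
`K_{r,s}(a,b)` over all `r ≥ 0` and `a, b ∈ [0,1]` with `a + b = 1` equals
`p(s) = s(1−n²s)/(1+s+2ns)`, and `p(s) ≤ 1/(1+2n)²` with equality iff `s = 1/(2n²+n)`. -/
theorem stmt_19 (n : ℕ) (hn : 1 ≤ n) (s : ℝ) (hs0 : 0 < s) (hs1 : s < 1 / (n : ℝ) ^ 2) :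
    sInf {K : ℝ | ∃ r a b : ℝ, 0 ≤ r ∧ a ∈ Set.Icc (0 : ℝ) 1 ∧ b ∈ Set.Icc (0 : ℝ) 1 ∧
          a + b = 1 ∧ K = Khit n s r a b}
        / sSup {K : ℝ | ∃ r a b : ℝ, 0 ≤ r ∧ a ∈ Set.Icc (0 : ℝ) 1 ∧ b ∈ Set.Icc (0 : ℝ) 1 ∧
          a + b = 1 ∧ K = Khit n s r a b}
      = s * (1 - (n : ℝ) ^ 2 * s) / (1 + s + 2 * (n : ℝ) * s) ∧
    s * (1 - (n : ℝ) ^ 2 * s) / (1 + s + 2 * (n : ℝ) * s) ≤ 1 / (1 + 2 * (n : ℝ)) ^ 2 ∧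
    (s * (1 - (n : ℝ) ^ 2 * s) / (1 + s + 2 * (n : ℝ) * s) = 1 / (1 + 2 * (n : ℝ)) ^ 2 ↔
      s = 1 / (2 * (n : ℝ) ^ 2 + (n : ℝ))) := by
  have hn1 : (1:ℝ) ≤ (n:ℝ) := by exact_mod_cast hn
  have hn0 : (0:ℝ) < (n:ℝ) := by linarith
  have hNs : (n:ℝ)^2*s < 1 := by
    rw [lt_div_iff₀ (by positivity)] at hs1; nlinarith
  have hE : (0:ℝ) < 1 + s + 2*(n:ℝ)*s := by nlinarith
  have hmem : (4/s) ∈ {K : ℝ | ∃ r a b : ℝ, 0 ≤ r ∧ a ∈ Set.Icc (0 : ℝ) 1 ∧ b ∈ Set.Icc (0 : ℝ) 1 ∧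
      a + b = 1 ∧ K = Khit n s r a b} :=
    ⟨0, 0, 1, le_refl _, ⟨le_refl _, zero_le_one⟩, ⟨zero_le_one, le_refl _⟩,
      by norm_num, by simp [Khit]⟩
  have hub : ∀ K ∈ {K : ℝ | ∃ r a b : ℝ, 0 ≤ r ∧ a ∈ Set.Icc (0 : ℝ) 1 ∧ b ∈ Set.Icc (0 : ℝ) 1 ∧
      a + b = 1 ∧ K = Khit n s r a b}, K ≤ 4/s := by
    rintro K ⟨r, a, b, hr, ⟨ha0, ha1⟩, ⟨hb0, hb1⟩, hab, rfl⟩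
    simpa only [Khit] using Khit_le (n:ℝ) s r a b hn1 hs0 hNs hr ha0 hb0 hab
  have hsup : sSup {K : ℝ | ∃ r a b : ℝ, 0 ≤ r ∧ a ∈ Set.Icc (0 : ℝ) 1 ∧ b ∈ Set.Icc (0 : ℝ) 1 ∧
      a + b = 1 ∧ K = Khit n s r a b} = 4/s :=
    IsGreatest.csSup_eq ⟨hmem, hub⟩
  have hlb : ∀ K ∈ {K : ℝ | ∃ r a b : ℝ, 0 ≤ r ∧ a ∈ Set.Icc (0 : ℝ) 1 ∧ b ∈ Set.Icc (0 : ℝ) 1 ∧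
      a + b = 1 ∧ K = Khit n s r a b}, 4*(1-(n:ℝ)^2*s)/(1+s+2*(n:ℝ)*s) ≤ K := by
    rintro K ⟨r, a, b, hr, ⟨ha0, ha1⟩, ⟨hb0, hb1⟩, hab, rfl⟩
    simpa only [Khit] using Khit_ge (n:ℝ) s r a b hn1 hs0 hNs hr ha0 hb0 hab
  have hexist : ∀ w, 4*(1-(n:ℝ)^2*s)/(1+s+2*(n:ℝ)*s) < w →
      ∃ K ∈ {K : ℝ | ∃ r a b : ℝ, 0 ≤ r ∧ a ∈ Set.Icc (0 : ℝ) 1 ∧ b ∈ Set.Icc (0 : ℝ) 1 ∧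
        a + b = 1 ∧ K = Khit n s r a b}, K < w := by
    intro w hw
    set A : ℝ := (1+(n:ℝ)*s)/(1+s+2*(n:ℝ)*s) with hAdef
    set B : ℝ := s*(1+(n:ℝ))/(1+s+2*(n:ℝ)*s) with hBdef
    have hA0 : (0:ℝ) ≤ A := by rw [hAdef]; positivity
    have hA1 : A ≤ 1 := by rw [hAdef, div_le_one hE]; nlinarith
    have hB0 : (0:ℝ) ≤ B := by rw [hBdef]; positivity
    have hB1 : B ≤ 1 := by rw [hBdef, div_le_one hE]; nlinarith
    have hAB : A + B = 1 := by rw [hAdef, hBdef]; field_simp; ring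
    have hq : 4*A^2 - 8*(n:ℝ)*(A*B) + (4/s)*B^2 = 4*(1-(n:ℝ)^2*s)/(1+s+2*(n:ℝ)*s) := by
      rw [hAdef, hBdef]; field_simp; ring
    have hid : ∀ r : ℝ, 0 ≤ r → Khit n s r A B
        = 4*(1-(n:ℝ)^2*s)/(1+s+2*(n:ℝ)*s)
          + (-4*(n:ℝ)*s*(1+(n:ℝ))*A^2 + 16*(n:ℝ)*(1+(n:ℝ)*s)*(A*B)) * (1/(1+r+(n:ℝ)*s))
          + (4*(n:ℝ)*s*((n:ℝ)+(n:ℝ)^2*s)*A^2 - 8*(n:ℝ)^2*s*(1+(n:ℝ)*s)*(A*B))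
            * (1/(1+r+(n:ℝ)*s))^2 := by
      intro r hr
      have hd : (0:ℝ) < 1+r+(n:ℝ)*s := by nlinarith
      show (4 * ((1 + r) ^ 2 + (n:ℝ) * s * (1 + r - (n:ℝ) * r)) / (1 + r + (n:ℝ) * s) ^ 2) * A ^ 2
          + (8 * (n:ℝ) * (1 + (n:ℝ) * s - r ^ 2) / (1 + r + (n:ℝ) * s) ^ 2) * (A * B)
          + (4 / s) * B ^ 2 = _
      rw [Kdecomp (n:ℝ) s r A B hs0.ne' hd.ne', hq]
    have h0 : Tendsto (fun r:ℝ => 1/(1+r+(n:ℝ)*s)) atTop (nhds 0) := by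
      have h1 : Tendsto (fun r:ℝ => 1+r+(n:ℝ)*s) atTop atTop := by
        apply tendsto_atTop_add_const_right
        exact tendsto_atTop_add_const_left atTop 1 tendsto_id
      simpa only [one_div, Pi.inv_def] using h1.inv_tendsto_atTop
    have hten : Tendsto (fun r:ℝ =>
        4*(1-(n:ℝ)^2*s)/(1+s+2*(n:ℝ)*s)
          + (-4*(n:ℝ)*s*(1+(n:ℝ))*A^2 + 16*(n:ℝ)*(1+(n:ℝ)*s)*(A*B)) * (1/(1+r+(n:ℝ)*s))
          + (4*(n:ℝ)*s*((n:ℝ)+(n:ℝ)^2*s)*A^2 - 8*(n:ℝ)^2*s*(1+(n:ℝ)*s)*(A*B))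
            * (1/(1+r+(n:ℝ)*s))^2) atTop
        (nhds (4*(1-(n:ℝ)^2*s)/(1+s+2*(n:ℝ)*s))) := by
      have h2 : Tendsto (fun r:ℝ =>
          4*(1-(n:ℝ)^2*s)/(1+s+2*(n:ℝ)*s)
            + (-4*(n:ℝ)*s*(1+(n:ℝ))*A^2 + 16*(n:ℝ)*(1+(n:ℝ)*s)*(A*B)) * (1/(1+r+(n:ℝ)*s))
            + (4*(n:ℝ)*s*((n:ℝ)+(n:ℝ)^2*s)*A^2 - 8*(n:ℝ)^2*s*(1+(n:ℝ)*s)*(A*B))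
              * (1/(1+r+(n:ℝ)*s))^2) atTop
          (nhds (4*(1-(n:ℝ)^2*s)/(1+s+2*(n:ℝ)*s)
            + (-4*(n:ℝ)*s*(1+(n:ℝ))*A^2 + 16*(n:ℝ)*(1+(n:ℝ)*s)*(A*B)) * 0
            + (4*(n:ℝ)*s*((n:ℝ)+(n:ℝ)^2*s)*A^2 - 8*(n:ℝ)^2*s*(1+(n:ℝ)*s)*(A*B)) * 0^2)) :=
        (tendsto_const_nhds.add (tendsto_const_nhds.mul h0)).add
          (tendsto_const_nhds.mul (h0.pow 2))
      simpa using h2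
    obtain ⟨r, hrw, hr0⟩ := ((hten.eventually (gt_mem_nhds hw)).and (eventually_ge_atTop (0:ℝ))).exists
    refine ⟨Khit n s r A B, ⟨r, A, B, hr0, ⟨hA0, hA1⟩, ⟨hB0, hB1⟩, hAB, rfl⟩, ?_⟩
    rw [hid r hr0]
    exact hrw
  have hinf : sInf {K : ℝ | ∃ r a b : ℝ, 0 ≤ r ∧ a ∈ Set.Icc (0 : ℝ) 1 ∧ b ∈ Set.Icc (0 : ℝ) 1 ∧
      a + b = 1 ∧ K = Khit n s r a b} = 4*(1-(n:ℝ)^2*s)/(1+s+2*(n:ℝ)*s) :=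
    csInf_eq_of_forall_ge_of_forall_gt_exists_lt ⟨_, hmem⟩ hlb hexist
  refine ⟨?_, ?_, ?_, ?_⟩
  · rw [hinf, hsup]
    rw [div_div_div_comm]
    have h4 : (4:ℝ)*(1-(n:ℝ)^2*s)/4 = 1-(n:ℝ)^2*s := by ring
    rw [h4, div_div_eq_mul_div]
    ring
  · rw [div_le_div_iff₀ hE (by positivity)]
    nlinarith [sq_nonneg (1 - (n:ℝ)*s*(2*(n:ℝ)+1))]
  · intro h
    rw [div_eq_div_iff hE.ne' (by positivity : ((1+2*(n:ℝ))^2) ≠ 0)] at h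
    have h2 : (1 - (n:ℝ)*s*(2*(n:ℝ)+1))^2 = 0 := by linear_combination -h
    have h3 : 1 - (n:ℝ)*s*(2*(n:ℝ)+1) = 0 := by
      exact (pow_eq_zero_iff two_ne_zero).mp h2
    rw [eq_div_iff (by positivity : (2*(n:ℝ)^2+(n:ℝ)) ≠ 0)]
    linear_combination -h3
  · intro h
    have hne : (2*(n:ℝ)^2+(n:ℝ)) ≠ 0 := by positivity
    have hne2 : (1+2*(n:ℝ)) ≠ 0 := by positivity
    rw [h]
    field_simp
    ring
end
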